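/- arXiv:2403.09649 — 9 statements merged into one kernel-verified Lean document; each statement's English description precedes it below -/
import Mathlib

section
/- For every x ∈ (0, π/2), one has exp((4·ln(2/π)/π²)·x²) < sin(x)/x < exp(−x²/6). -/
open Real

lemma nonneg_of_hasDerivAt {f f' : ℝ → ℝ} (hd : ∀ y, HasDerivAt f (f' y) y)
    (h0 : f 0 = 0) (hnn : ∀ y, 0 < y → 0 ≤ f' y) {x : ℝ} (hx : 0 ≤ x) :
    0 ≤ f x := by
  have hmono : MonotoneOn f (Set.Ici 0) := by
    apply monotoneOn_of_deriv_nonneg (convex_Ici 0)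
    · exact fun y _ => ((hd y).differentiableAt.continuousAt).continuousWithinAt
    · exact fun y _ => (hd y).differentiableAt.differentiableWithinAt
    · intro y hy
      rw [(hd y).deriv]
      rw [interior_Ici, Set.mem_Ioi] at hy
      exact hnn y hy
  have := hmono (Set.self_mem_Ici) (Set.mem_Ici.2 hx) hx
  rwa [h0] at this

lemma sin_ge_deg3 {x : ℝ} (hx : 0 ≤ x) : x - x^3/6 ≤ Real.sin x := by
  have hd : ∀ y : ℝ, HasDerivAt (fun y : ℝ => Real.sin y - (y - y^3/6))
      (Real.cos y - (1 - y^2/2)) y := by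
    intro y
    have h1 : HasDerivAt (fun y : ℝ => y - y^3/6) (1 - 3*(y^2)/6) y := by
      simpa using (hasDerivAt_id y).fun_sub ((hasDerivAt_pow 3 y).div_const 6)
    have h2 := (Real.hasDerivAt_sin y).fun_sub h1
    refine h2.congr_deriv ?_
    ring
  have h0 : Real.sin 0 - ((0:ℝ) - 0^3/6) = 0 := by norm_num
  have hnn : ∀ y : ℝ, 0 < y → 0 ≤ Real.cos y - (1 - y^2/2) := fun y _ => by
    linarith [Real.one_sub_sq_div_two_le_cos (x := y)]
  have := nonneg_of_hasDerivAt hd h0 hnn hx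
  linarith [this]

lemma cos_le_deg4 {x : ℝ} (hx : 0 ≤ x) : Real.cos x ≤ 1 - x^2/2 + x^4/24 := by
  have hd : ∀ y : ℝ, HasDerivAt (fun y : ℝ => (1 - y^2/2 + y^4/24) - Real.cos y)
      (Real.sin y - (y - y^3/6)) y := by
    intro y
    have h1 : HasDerivAt (fun y : ℝ => 1 - y^2/2 + y^4/24)
        (0 - 2*(y^1)/2 + 4*(y^3)/24) y := by
      simpa using (((hasDerivAt_const y (1:ℝ)).fun_sub ((hasDerivAt_pow 2 y).div_const 2)).fun_add
        ((hasDerivAt_pow 4 y).div_const 24))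
    have h2 := h1.fun_sub (Real.hasDerivAt_cos y)
    refine h2.congr_deriv ?_
    ring
  have h0 : (1 - (0:ℝ)^2/2 + 0^4/24) - Real.cos 0 = 0 := by norm_num
  have hnn : ∀ y : ℝ, 0 < y → 0 ≤ Real.sin y - (y - y^3/6) := fun y hy => by
    linarith [sin_ge_deg3 hy.le]
  have := nonneg_of_hasDerivAt hd h0 hnn hx
  linarith [this]

lemma sin_le_deg5 {x : ℝ} (hx : 0 ≤ x) : Real.sin x ≤ x - x^3/6 + x^5/120 := by
  have hd : ∀ y : ℝ, HasDerivAt (fun y : ℝ => (y - y^3/6 + y^5/120) - Real.sin y)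
      ((1 - y^2/2 + y^4/24) - Real.cos y) y := by
    intro y
    have h1 : HasDerivAt (fun y : ℝ => y - y^3/6 + y^5/120)
        (1 - 3*(y^2)/6 + 5*(y^4)/120) y := by
      simpa using ((hasDerivAt_id y).fun_sub ((hasDerivAt_pow 3 y).div_const 6)).fun_add
        ((hasDerivAt_pow 5 y).div_const 120)
    have h2 := h1.sub (Real.hasDerivAt_sin y)
    refine h2.congr_deriv ?_
    ring
  have h0 : ((0:ℝ) - 0^3/6 + 0^5/120) - Real.sin 0 = 0 := by norm_num
  have hnn : ∀ y : ℝ, 0 < y → 0 ≤ (1 - y^2/2 + y^4/24) - Real.cos y := fun y hy => by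
    linarith [cos_le_deg4 hy.le]
  have := nonneg_of_hasDerivAt hd h0 hnn hx
  linarith [this]

lemma cos_ge_deg6 {x : ℝ} (hx : 0 ≤ x) : 1 - x^2/2 + x^4/24 - x^6/720 ≤ Real.cos x := by
  have hd : ∀ y : ℝ, HasDerivAt (fun y : ℝ => Real.cos y - (1 - y^2/2 + y^4/24 - y^6/720))
      ((y - y^3/6 + y^5/120) - Real.sin y) y := by
    intro y
    have h1 : HasDerivAt (fun y : ℝ => 1 - y^2/2 + y^4/24 - y^6/720)
        (0 - 2*(y^1)/2 + 4*(y^3)/24 - 6*(y^5)/720) y := by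
      simpa using ((((hasDerivAt_const y (1:ℝ)).fun_sub ((hasDerivAt_pow 2 y).div_const 2)).fun_add
        ((hasDerivAt_pow 4 y).div_const 24)).fun_sub ((hasDerivAt_pow 6 y).div_const 720))
    have h2 := (Real.hasDerivAt_cos y).fun_sub h1
    refine h2.congr_deriv ?_
    ring
  have h0 : Real.cos 0 - (1 - (0:ℝ)^2/2 + 0^4/24 - 0^6/720) = 0 := by norm_num
  have hnn : ∀ y : ℝ, 0 < y → 0 ≤ (y - y^3/6 + y^5/120) - Real.sin y := fun y hy => by
    linarith [sin_le_deg5 hy.le]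
  have := nonneg_of_hasDerivAt hd h0 hnn hx
  linarith [this]

lemma sin_ge_deg7 {x : ℝ} (hx : 0 ≤ x) : x - x^3/6 + x^5/120 - x^7/5040 ≤ Real.sin x := by
  have hd : ∀ y : ℝ, HasDerivAt (fun y : ℝ => Real.sin y - (y - y^3/6 + y^5/120 - y^7/5040))
      (Real.cos y - (1 - y^2/2 + y^4/24 - y^6/720)) y := by
    intro y
    have h1 : HasDerivAt (fun y : ℝ => y - y^3/6 + y^5/120 - y^7/5040)
        (1 - 3*(y^2)/6 + 5*(y^4)/120 - 7*(y^6)/5040) y := by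
      simpa using (((hasDerivAt_id y).fun_sub ((hasDerivAt_pow 3 y).div_const 6)).fun_add
        ((hasDerivAt_pow 5 y).div_const 120)).fun_sub ((hasDerivAt_pow 7 y).div_const 5040)
    have h2 := (Real.hasDerivAt_sin y).fun_sub h1
    refine h2.congr_deriv ?_
    ring
  have h0 : Real.sin 0 - ((0:ℝ) - 0^3/6 + 0^5/120 - 0^7/5040) = 0 := by norm_num
  have hnn : ∀ y : ℝ, 0 < y → 0 ≤ Real.cos y - (1 - y^2/2 + y^4/24 - y^6/720) := fun y hy => by
    linarith [cos_ge_deg6 hy.le]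
  have := nonneg_of_hasDerivAt hd h0 hnn hx
  linarith [this]


lemma exp_le_sum3 {t : ℝ} (h0 : 0 ≤ t) (h1 : t ≤ 1) :
    Real.exp t ≤ 1 + t + t^2/2 + t^3 * 2/9 := by
  have h := Real.exp_bound' h0 h1 (n := 3) (by norm_num)
  norm_num [Finset.sum_range_succ, Nat.factorial] at h
  nlinarith [h]
lemma exp_le_sum6 {t : ℝ} (h0 : 0 ≤ t) (h1 : t ≤ 1) :
    Real.exp t ≤ 1 + t + t^2/2 + t^3/6 + t^4/24 + t^5/120 + t^6 * 7/4320 := by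
  have h := Real.exp_bound' h0 h1 (n := 6) (by norm_num)
  norm_num [Finset.sum_range_succ, Nat.factorial] at h
  nlinarith [h]
lemma sum5_le_exp {t : ℝ} (h0 : 0 ≤ t) :
    1 + t + t^2/2 + t^3/6 + t^4/24 ≤ Real.exp t := by
  have h := Real.sum_le_exp_of_nonneg h0 5
  norm_num [Finset.sum_range_succ, Nat.factorial] at h
  nlinarith [h]
lemma sum6_le_exp {t : ℝ} (h0 : 0 ≤ t) :
    1 + t + t^2/2 + t^3/6 + t^4/24 + t^5/120 ≤ Real.exp t := by
  have h := Real.sum_le_exp_of_nonneg h0 6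
  norm_num [Finset.sum_range_succ, Nat.factorial] at h
  nlinarith [h]

lemma log_pi_div_two_lt : Real.log (π/2) < 0.4532 := by
  rw [Real.log_lt_iff_lt_exp (by positivity)]
  have h1 : (1:ℝ) + 0.4532 + 0.4532^2/2 + 0.4532^3/6 + 0.4532^4/24 + 0.4532^5/120
      ≤ Real.exp 0.4532 := sum6_le_exp (by norm_num)
  nlinarith [Real.pi_lt_d6]

lemma log_pi_div_two_gt : 0.45 < Real.log (π/2) := by
  rw [Real.lt_log_iff_exp_lt (by positivity)]
  have h1 : Real.exp 0.45 ≤ 1 + 0.45 + 0.45^2/2 + 0.45^3/6 + 0.45^4/24 + 0.45^5/120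
      + 0.45^6 * 7/4320 := exp_le_sum6 (by norm_num) (by norm_num)
  nlinarith [Real.pi_gt_d6]



lemma polyA {X : ℝ} (h0 : 0 < X) (h2 : X ≤ 2) :
    1 < (1 - X/6 + X^2/120 - X^3/5040) *
      (1 + 0.18237*X + (0.18237*X)^2/2 + (0.18237*X)^3/6 + (0.18237*X)^4/24) := by
  nlinarith [mul_nonneg (sub_nonneg.2 h2) h0.le,
    mul_nonneg (mul_nonneg (sub_nonneg.2 h2) h0.le) h0.le,
    mul_nonneg (mul_nonneg (mul_nonneg (sub_nonneg.2 h2) h0.le) h0.le) h0.le,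
    mul_nonneg (mul_nonneg (mul_nonneg (mul_nonneg (sub_nonneg.2 h2) h0.le) h0.le) h0.le) h0.le,
    mul_nonneg (mul_nonneg (mul_nonneg (mul_nonneg (mul_nonneg (sub_nonneg.2 h2) h0.le) h0.le) h0.le) h0.le) h0.le,
    mul_nonneg (mul_nonneg (mul_nonneg (mul_nonneg (mul_nonneg (mul_nonneg (sub_nonneg.2 h2) h0.le) h0.le) h0.le) h0.le) h0.le) h0.le]

lemma polyB {X : ℝ} (h0 : 0 < X) (h2 : X < 2.4675) :
    (1 - X/6 + X^2/120) * (1 + X/6 + (X/6)^2/2 + (X/6)^3 * 2/9) < 1 := by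
  nlinarith [mul_pos h0 h0, mul_pos (mul_pos h0 h0) h0,
    mul_pos (mul_pos (mul_pos h0 h0) h0) h0,
    mul_pos (mul_pos (mul_pos (mul_pos h0 h0) h0) h0) h0]

lemma polyC (x p : ℝ) (hp1 : 3.141592 < p) (hp2 : p < 3.141593)
    (hx14 : 1.4142 < x) (hx2 : x < p/2) :
    2*x < p * ((1 - (p/2 - x)^2/2) * (1 - 0.18368 * (p^2/4 - x^2))) := by
  have hu0 : 0 < p/2 - x := by linarith
  have hu1 : p/2 - x < 0.1566 := by linarith
  have hppos : (0:ℝ) < p := by linarith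
  have h1 : (p/2 - x)*p < 0.492 := by nlinarith
  have hpsq : p^2 < 9.8696066 := by nlinarith
  have t3 : 0 ≤ (1.81285 - 0.18368*p^2) * (p/2 - x) := by nlinarith
  have t4 : 0 ≤ (0.492 - (p/2 - x)*p) * (p/2 - x) :=
    mul_nonneg (by linarith) hu0.le
  have t5 : 0 ≤ p * (p/2 - x)^3 * (p - (p/2 - x)) := by
    apply mul_nonneg (mul_nonneg hppos.le (by positivity))
    linarith
  nlinarith [t3, t4, t5, hu0]

set_option maxHeartbeats 1000000 in
/-- `exp((4 ln(2/π)/π²) x²) < sin x / x < exp(−x²/6)` for `x ∈ (0, π/2)`. -/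
theorem exp_bounds_sin_div (x : ℝ) (hx : x ∈ Set.Ioo 0 (Real.pi / 2)) :
    Real.exp ((4 * Real.log (2 / Real.pi) / Real.pi ^ 2) * x ^ 2) < Real.sin x / x ∧
    Real.sin x / x < Real.exp (-x ^ 2 / 6) := by
  obtain ⟨hx0, hx2⟩ := hx
  have hπpos := Real.pi_pos
  have hπ1 : 3.141592 < π := Real.pi_gt_d6
  have hπ2 : π < 3.141593 := Real.pi_lt_d6
  have hX : x^2 < 2.4675 := by nlinarith
  have hXpos : 0 < x^2 := by positivity
  have hsinpos : 0 < Real.sin x := Real.sin_pos_of_pos_of_lt_pi hx0 (by nlinarith)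
  constructor
  · -- lower bound
    obtain ⟨L, hLdef⟩ : ∃ L : ℝ, Real.log (π/2) = L := ⟨_, rfl⟩
    have hL1 : 0.45 < L := hLdef ▸ log_pi_div_two_gt
    have hL2 : L < 0.4532 := hLdef ▸ log_pi_div_two_lt
    obtain ⟨γ, hγdef⟩ : ∃ g : ℝ, g = 4 * L / π^2 := ⟨_, rfl⟩
    have hπsq1 : 9.8696 < π^2 := by nlinarith
    have hπsq2 : π^2 < 9.8696066 := by
      nlinarith [mul_pos (sub_pos.2 hπ2) (by positivity : (0:ℝ) < 3.141593 + π)]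
    have hγpos : 0 < γ := by
      rw [hγdef]; exact div_pos (by linarith) (by positivity)
    have hγlb : 0.18237 ≤ γ := by
      rw [hγdef, le_div_iff₀ (by positivity)]
      nlinarith
    have hγub : γ ≤ 0.18368 := by
      rw [hγdef, div_le_iff₀ (by positivity)]
      nlinarith
    have hc : (4 * Real.log (2 / π) / π ^ 2) * x ^ 2 = -(γ * x^2) := by
      have h2 : Real.log (2/π) = -L := by
        rw [← hLdef, ← Real.log_inv, inv_div]
      rw [h2, hγdef]; ring
    rw [hc, lt_div_iff₀ hx0, Real.exp_neg, inv_mul_lt_iff₀ (Real.exp_pos _)]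
    -- goal : x < exp (γ * x^2) * sin x
    rcases le_or_gt (x^2) 2 with hA | hB
    · -- small x
      have hu0 : (0:ℝ) ≤ 0.18237 * x^2 := by positivity
      have hule : 0.18237 * x^2 ≤ γ * x^2 := mul_le_mul_of_nonneg_right hγlb hXpos.le
      have hE : 1 + 0.18237*x^2 + (0.18237*x^2)^2/2 + (0.18237*x^2)^3/6 + (0.18237*x^2)^4/24
          ≤ Real.exp (γ * x^2) :=
        le_trans (sum5_le_exp hu0) (Real.exp_le_exp.2 hule)
      have hs7 := sin_ge_deg7 hx0.le
      have hQ := polyA hXpos hA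
      have hpoly : 0 < 1 + 0.18237*x^2 + (0.18237*x^2)^2/2 + (0.18237*x^2)^3/6 + (0.18237*x^2)^4/24 := by positivity
      calc x = x * 1 := (mul_one x).symm
        _ < x * ((1 - x^2/6 + (x^2)^2/120 - (x^2)^3/5040) *
            (1 + 0.18237*x^2 + (0.18237*x^2)^2/2 + (0.18237*x^2)^3/6 + (0.18237*x^2)^4/24)) :=
            mul_lt_mul_of_pos_left hQ hx0
        _ = (x - x^3/6 + x^5/120 - x^7/5040) *
            (1 + 0.18237*x^2 + (0.18237*x^2)^2/2 + (0.18237*x^2)^3/6 + (0.18237*x^2)^4/24) := by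
            ring
        _ ≤ Real.sin x *
            (1 + 0.18237*x^2 + (0.18237*x^2)^2/2 + (0.18237*x^2)^3/6 + (0.18237*x^2)^4/24) :=
            mul_le_mul_of_nonneg_right hs7 hpoly.le
        _ ≤ Real.sin x * Real.exp (γ * x^2) := mul_le_mul_of_nonneg_left hE hsinpos.le
        _ = Real.exp (γ * x^2) * Real.sin x := mul_comm _ _
    · -- x near π/2
      have hxx : x^2 < π^2/4 := by nlinarith
      have hside : (0:ℝ) ≤ π^2/4 - x^2 := by linarith
      have hw0 : (0:ℝ) ≤ 0.18368 * (π^2/4 - x^2) := by positivity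
      have hw1 : 0.18368 * (π^2/4 - x^2) < 1 := by nlinarith
      have h4 : γ * (π^2/4) = L := by
        rw [hγdef]; field_simp
      have hveq : -(γ * x^2) = γ * (π^2/4 - x^2) - L := by linarith [h4]
      have hvle : γ * (π^2/4 - x^2) ≤ 0.18368 * (π^2/4 - x^2) :=
        mul_le_mul_of_nonneg_right hγub hside
      have hv0 : 0 ≤ γ * (π^2/4 - x^2) := mul_nonneg hγpos.le hside
      have hEpos : 0 < Real.exp (γ * (π^2/4 - x^2)) := Real.exp_pos _
      have hexpv : Real.exp (γ * (π^2/4 - x^2)) * (1 - 0.18368 * (π^2/4 - x^2)) ≤ 1 := by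
        have h2 := Real.add_one_le_exp (-(γ * (π^2/4 - x^2)))
        have h3 : 1 - 0.18368 * (π^2/4 - x^2) ≤ Real.exp (-(γ * (π^2/4 - x^2))) := by linarith
        calc Real.exp (γ * (π^2/4 - x^2)) * (1 - 0.18368 * (π^2/4 - x^2))
            ≤ Real.exp (γ * (π^2/4 - x^2)) * Real.exp (-(γ * (π^2/4 - x^2))) :=
              mul_le_mul_of_nonneg_left h3 hEpos.le
          _ = 1 := by rw [← Real.exp_add]; simp
      have hsin : 1 - (π/2 - x)^2/2 ≤ Real.sin x := by
        rw [← Real.cos_pi_div_two_sub]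
        exact Real.one_sub_sq_div_two_le_cos
      have hx14 : 1.4142 < x := by nlinarith
      have hkey2 : 2*x < π * ((1 - (π/2 - x)^2/2) * (1 - 0.18368 * (π^2/4 - x^2))) :=
        polyC x π hπ1 hπ2 hx14 hx2
      have h7 : 2*x < π * (Real.sin x * (1 - 0.18368 * (π^2/4 - x^2))) := by
        have h5 : π * ((1 - (π/2 - x)^2/2) * (1 - 0.18368 * (π^2/4 - x^2)))
            ≤ π * (Real.sin x * (1 - 0.18368 * (π^2/4 - x^2))) := by
          apply mul_le_mul_of_nonneg_left _ hπpos.le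
          exact mul_le_mul_of_nonneg_right hsin (by linarith)
        linarith
      have h8 : 2*x*Real.exp (γ * (π^2/4 - x^2)) < π * Real.sin x := by
        have h9 := mul_lt_mul_of_pos_right h7 hEpos
        have h10 : π * (Real.sin x * (1 - 0.18368 * (π^2/4 - x^2))) * Real.exp (γ * (π^2/4 - x^2))
            ≤ π * Real.sin x := by
          have h11 := mul_le_mul_of_nonneg_left hexpv (mul_pos hπpos hsinpos).le
          calc π * (Real.sin x * (1 - 0.18368 * (π^2/4 - x^2))) * Real.exp (γ * (π^2/4 - x^2))
              = π * Real.sin x * (Real.exp (γ * (π^2/4 - x^2)) * (1 - 0.18368 * (π^2/4 - x^2))) := by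
                ring
            _ ≤ π * Real.sin x * 1 := h11
            _ = π * Real.sin x := mul_one _
        linarith
      have hEeq : Real.exp (-(γ * x^2)) = Real.exp (γ * (π^2/4 - x^2)) * (2/π) := by
        rw [hveq, Real.exp_sub, ← hLdef, Real.exp_log (by positivity)]
        field_simp
      have hlt : x * (Real.exp (γ * (π^2/4 - x^2)) * (2/π)) < Real.sin x := by
        rw [show x * (Real.exp (γ * (π^2/4 - x^2)) * (2/π))
            = (2*x*Real.exp (γ * (π^2/4 - x^2)))/π by ring, div_lt_iff₀ hπpos]
        linarith
      calc x = x * (Real.exp (-(γ*x^2)) * Real.exp (γ*x^2)) := by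
            rw [← Real.exp_add]; simp
        _ = (x * (Real.exp (γ * (π^2/4 - x^2)) * (2/π))) * Real.exp (γ*x^2) := by rw [hEeq]; ring
        _ < Real.sin x * Real.exp (γ*x^2) := mul_lt_mul_of_pos_right hlt (Real.exp_pos _)
        _ = Real.exp (γ*x^2) * Real.sin x := mul_comm _ _
  · -- upper bound
    have ht0 : (0:ℝ) ≤ x^2/6 := by positivity
    have ht1 : x^2/6 ≤ 1 := by nlinarith
    have hE := exp_le_sum3 ht0 ht1
    have hs5 := sin_le_deg5 hx0.le
    have hs5pos : 0 < x - x^3/6 + x^5/120 := lt_of_lt_of_le hsinpos hs5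
    have hQ := polyB hXpos hX
    have hkey : Real.sin x * Real.exp (x^2/6) < x := by
      calc Real.sin x * Real.exp (x^2/6)
          ≤ (x - x^3/6 + x^5/120) * Real.exp (x^2/6) :=
            mul_le_mul_of_nonneg_right hs5 (Real.exp_pos _).le
        _ ≤ (x - x^3/6 + x^5/120) * (1 + x^2/6 + (x^2/6)^2/2 + (x^2/6)^3 * 2/9) :=
            mul_le_mul_of_nonneg_left hE hs5pos.le
        _ = x * ((1 - x^2/6 + (x^2)^2/120) * (1 + x^2/6 + (x^2/6)^2/2 + (x^2/6)^3 * 2/9)) := by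
            ring
        _ < x * 1 := mul_lt_mul_of_pos_left hQ hx0
        _ = x := mul_one x
    have heq : Real.exp (-x^2/6) = (Real.exp (x^2/6))⁻¹ := by
      rw [← Real.exp_neg]; ring_nf
    rw [div_lt_iff₀ hx0, heq, inv_mul_eq_div, lt_div_iff₀ (Real.exp_pos _)]
    linarith [hkey]
end

section
/- For every a ∈ (0, π/2) and every x ∈ (0, a), one has exp((ln(cos a)/a²)·x²) < cos(x) < exp(−x²/2). -/
open Real

private lemma cos_pos_of_Ico {t : ℝ} (ht : t ∈ Set.Ico 0 (π/2)) : 0 < Real.cos t :=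
  Real.cos_pos_of_mem_Ioo ⟨by linarith [ht.1, Real.pi_pos], ht.2⟩

/-- `t * tan t + 2 * log (cos t) > 0` on `(0, π/2)`. -/
private lemma phi_pos {t : ℝ} (h0 : 0 < t) (h2 : t < π/2) :
    0 < t * Real.tan t + 2 * Real.log (Real.cos t) := by
  set φ : ℝ → ℝ := fun t => t * (Real.sin t / Real.cos t) + 2 * Real.log (Real.cos t) with hφ
  have key : StrictMonoOn φ (Set.Ico 0 (π/2)) := by
    apply strictMonoOn_of_deriv_pos (convex_Ico _ _)
    · apply ContinuousOn.add
      · exact continuousOn_id.mul ((Real.continuous_sin.continuousOn).div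
          (Real.continuous_cos.continuousOn) (fun t ht => (cos_pos_of_Ico ht).ne'))
      · exact continuousOn_const.mul ((Real.continuous_cos.continuousOn).log
          (fun t ht => (cos_pos_of_Ico ht).ne'))
    · intro t ht
      rw [interior_Ico] at ht
      have hc : 0 < Real.cos t := cos_pos_of_Ico ⟨ht.1.le, ht.2⟩
      have hd : HasDerivAt φ
          ((1 * (Real.sin t / Real.cos t) + t * ((Real.cos t * Real.cos t - Real.sin t * (-Real.sin t)) / (Real.cos t)^2)) + 2 * (-Real.sin t / Real.cos t)) t := by
        apply HasDerivAt.add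
        · exact (hasDerivAt_id t).mul
            ((Real.hasDerivAt_sin t).div (Real.hasDerivAt_cos t) hc.ne')
        · exact (((Real.hasDerivAt_cos t).log hc.ne').const_mul 2)
      rw [hd.deriv]
      have hsc : Real.sin t * Real.cos t < t := by
        calc Real.sin t * Real.cos t ≤ Real.sin t * 1 := by
              nlinarith [Real.sin_pos_of_pos_of_lt_pi ht.1 (by linarith [Real.pi_pos, ht.2] : t < π), Real.cos_le_one t]
          _ = Real.sin t := by ring
          _ < t := Real.sin_lt ht.1
      have hpyth := Real.sin_sq_add_cos_sq t
      have h1 : (Real.cos t * Real.cos t - Real.sin t * (-Real.sin t)) / (Real.cos t)^2 = 1 / (Real.cos t)^2 := by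
        rw [show Real.cos t * Real.cos t - Real.sin t * (-Real.sin t) = Real.sin t ^2 + Real.cos t^2 by ring, hpyth]
      rw [h1]
      have hc2 : (0:ℝ) < (Real.cos t)^2 := by positivity
      have heq : 1 * (Real.sin t / Real.cos t) + t * (1 / (Real.cos t)^2) + 2 * (-Real.sin t / Real.cos t)
          = (t - Real.sin t * Real.cos t) / (Real.cos t)^2 := by
        field_simp
        ring
      rw [heq]
      exact div_pos (by linarith) hc2
  have h00 : φ 0 = 0 := by simp [hφ]
  have := key (Set.left_mem_Ico.2 (by linarith [Real.pi_pos])) ⟨h0.le, h2⟩ h0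
  rw [h00] at this
  simpa [hφ, Real.tan_eq_sin_div_cos] using this

/-- `log (cos x) < -x²/2` on `(0, π/2)`. -/
private lemma log_cos_lt {x : ℝ} (h0 : 0 < x) (h2 : x < π/2) :
    Real.log (Real.cos x) < -x^2/2 := by
  set G : ℝ → ℝ := fun t => -t^2/2 - Real.log (Real.cos t) with hG
  have key : StrictMonoOn G (Set.Ico 0 (π/2)) := by
    apply strictMonoOn_of_deriv_pos (convex_Ico _ _)
    · exact ((continuousOn_id.pow 2).neg.div_const 2).sub
        ((Real.continuous_cos.continuousOn).log (fun t ht => (cos_pos_of_Ico ht).ne'))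
    · intro t ht
      rw [interior_Ico] at ht
      have hc : 0 < Real.cos t := cos_pos_of_Ico ⟨ht.1.le, ht.2⟩
      have hd : HasDerivAt G (-(2 * t^1)/2 - (-Real.sin t / Real.cos t)) t := by
        exact (((hasDerivAt_pow 2 t).neg).div_const 2).sub
          ((Real.hasDerivAt_cos t).log hc.ne')
      rw [hd.deriv]
      have htan := Real.lt_tan ht.1 ht.2
      rw [Real.tan_eq_sin_div_cos] at htan
      have : -(2 * t^1)/2 - (-Real.sin t / Real.cos t) = Real.sin t / Real.cos t - t := by
        ring
      rw [this]
      linarith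
  have h00 : G 0 = 0 := by simp [hG]
  have := key (Set.left_mem_Ico.2 (by linarith [Real.pi_pos])) ⟨h0.le, h2⟩ h0
  rw [h00] at this
  simp only [hG] at this
  linarith

/-- `log (cos t) / t²` is strictly decreasing on `(0, π/2)`. -/
private lemma f_anti : StrictAntiOn (fun t => Real.log (Real.cos t) / t^2) (Set.Ioo 0 (π/2)) := by
  apply strictAntiOn_of_deriv_neg (convex_Ioo _ _)
  · apply ContinuousOn.div
    · exact (Real.continuous_cos.continuousOn).log
        (fun t ht => (Real.cos_pos_of_mem_Ioo ⟨by linarith [(Set.mem_Ioo.mp ht).1, Real.pi_pos], (Set.mem_Ioo.mp ht).2⟩).ne')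
    · exact continuousOn_id.pow 2
    · intro t ht
      exact pow_ne_zero 2 (ne_of_gt (Set.mem_Ioo.mp ht).1)
  · intro t ht
    rw [interior_Ioo] at ht
    have hc : 0 < Real.cos t := Real.cos_pos_of_mem_Ioo ⟨by linarith [ht.1, Real.pi_pos], ht.2⟩
    have ht0 : (0:ℝ) < t := ht.1
    have hd : HasDerivAt (fun t => Real.log (Real.cos t) / t^2)
        (((-Real.sin t / Real.cos t) * t^2 - Real.log (Real.cos t) * (2 * t^1)) / (t^2)^2) t := by
      exact ((Real.hasDerivAt_cos t).log hc.ne').div (hasDerivAt_pow 2 t) (by positivity)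
    rw [hd.deriv]
    apply div_neg_of_neg_of_pos _ (by positivity)
    have hphi := phi_pos ht.1 ht.2
    rw [Real.tan_eq_sin_div_cos] at hphi
    have hs : -Real.sin t / Real.cos t * t ^ 2 - Real.log (Real.cos t) * (2 * t ^ 1)
        = -t * (t * (Real.sin t / Real.cos t) + 2 * Real.log (Real.cos t)) := by ring
    rw [hs]
    exact mul_neg_of_neg_of_pos (by linarith) hphi

/-- `exp((ln(cos a)/a²) x²) < cos x < exp(−x²/2)` for `a ∈ (0, π/2)` and `x ∈ (0, a)`. -/
theorem exp_bounds_cos (a x : ℝ) (ha : a ∈ Set.Ioo 0 (Real.pi / 2))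
    (hx : x ∈ Set.Ioo 0 a) :
    Real.exp ((Real.log (Real.cos a) / a ^ 2) * x ^ 2) < Real.cos x ∧
    Real.cos x < Real.exp (-x ^ 2 / 2) := by
  obtain ⟨ha0, ha2⟩ := ha
  obtain ⟨hx0, hxa⟩ := hx
  have hx2 : x < π/2 := by linarith
  have hcx : 0 < Real.cos x := Real.cos_pos_of_mem_Ioo ⟨by linarith, hx2⟩
  constructor
  · have hf := f_anti ⟨hx0, hx2⟩ ⟨ha0, ha2⟩ hxa
    simp only at hf
    have : Real.log (Real.cos a) / a^2 * x^2 < Real.log (Real.cos x) := by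
      have h1 := mul_lt_mul_of_pos_right hf (by positivity : (0:ℝ) < x^2)
      rwa [div_mul_cancel₀ _ (by positivity : (x:ℝ)^2 ≠ 0)] at h1
    calc Real.exp (Real.log (Real.cos a) / a ^ 2 * x ^ 2)
        < Real.exp (Real.log (Real.cos x)) := Real.exp_lt_exp.mpr this
      _ = Real.cos x := Real.exp_log hcx
  · have := log_cos_lt hx0 hx2
    calc Real.cos x = Real.exp (Real.log (Real.cos x)) := (Real.exp_log hcx).symm
      _ < Real.exp (-x^2/2) := Real.exp_lt_exp.mpr this
end

section
/- For every b ∈ (0, π/2) and every x ∈ (0, b), one has exp((ln(b/tan b)/b²)·x²) < x/tan(x) < exp(−x²/3). -/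
open Real Filter Set Topology


lemma nonneg_of_deriv (f f' : ℝ → ℝ) (hd : ∀ t, HasDerivAt f (f' t) t)
    (h0 : f 0 = 0) (hf' : ∀ t, 0 ≤ t → 0 ≤ f' t) : ∀ u, 0 ≤ u → 0 ≤ f u := by
  intro u hu
  have hmono : MonotoneOn f (Set.Ici 0) := by
    apply monotoneOn_of_deriv_nonneg (convex_Ici 0)
      (fun t _ => (hd t).continuousAt.continuousWithinAt)
      (fun t ht => ((hd t).differentiableAt).differentiableWithinAt)
    intro t ht
    rw [interior_Ici] at ht
    rw [(hd t).deriv]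
    exact hf' t (le_of_lt ht)
  have := hmono (Set.self_mem_Ici) hu hu
  simpa [h0] using this

lemma sin_ge_cubic : ∀ u, 0 ≤ u → u - u^3/6 ≤ sin u := by
  have := nonneg_of_deriv (fun u => sin u - (u - u^3/6)) (fun u => cos u - (1 - u^2/2))
    (fun t => by
      have : HasDerivAt (fun u => sin u - (u - u^3/6)) (cos t - (1 - 3*t^2/6)) t :=
        (Real.hasDerivAt_sin t).sub (((hasDerivAt_id t).sub
          (((hasDerivAt_pow 3 t)).div_const 6)))
      convert this using 1; push_cast; ring)
    (by simp)
    (fun t _ => by nlinarith [Real.one_sub_sq_div_two_le_cos (x := t)])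
  intro u hu; linarith [this u hu]

lemma cos_le_quartic : ∀ u, 0 ≤ u → cos u ≤ 1 - u^2/2 + u^4/24 := by
  have := nonneg_of_deriv (fun u => 1 - u^2/2 + u^4/24 - cos u)
    (fun u => sin u - (u - u^3/6))
    (fun t => by
      have : HasDerivAt (fun u => 1 - u^2/2 + u^4/24 - cos u)
          (0 - 2*t/2 + 4*t^3/24 - (-sin t)) t := by
        have h := (((hasDerivAt_const t (1:ℝ)).sub ((hasDerivAt_pow 2 t).div_const 2)).add
          ((hasDerivAt_pow 4 t).div_const 24)).sub (Real.hasDerivAt_cos t)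
        refine h.congr_deriv ?_; push_cast; ring
      convert this using 1; push_cast; ring)
    (by simp)
    (fun t ht => by linarith [sin_ge_cubic t ht])
  intro u hu; linarith [this u hu]

lemma sin_le_quintic : ∀ u, 0 ≤ u → sin u ≤ u - u^3/6 + u^5/120 := by
  have := nonneg_of_deriv (fun u => u - u^3/6 + u^5/120 - sin u)
    (fun u => 1 - u^2/2 + u^4/24 - cos u)
    (fun t => by
      have : HasDerivAt (fun u => u - u^3/6 + u^5/120 - sin u)
          (1 - 3*t^2/6 + 5*t^4/120 - cos t) t :=
        (((hasDerivAt_id t).sub ((hasDerivAt_pow 3 t).div_const 6)).add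
          ((hasDerivAt_pow 5 t).div_const 120)).sub (Real.hasDerivAt_sin t)
      convert this using 1; push_cast; ring)
    (by simp)
    (fun t ht => by linarith [cos_le_quartic t ht])
  intro u hu; linarith [this u hu]

lemma cos_ge_sextic : ∀ u, 0 ≤ u → 1 - u^2/2 + u^4/24 - u^6/720 ≤ cos u := by
  have := nonneg_of_deriv (fun u => cos u - (1 - u^2/2 + u^4/24 - u^6/720))
    (fun u => (u - u^3/6 + u^5/120) - sin u)
    (fun t => by
      have : HasDerivAt (fun u => cos u - (1 - u^2/2 + u^4/24 - u^6/720))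
          ((-sin t) - (0 - 2*t/2 + 4*t^3/24 - 6*t^5/720)) t := by
        have h := (Real.hasDerivAt_cos t).sub ((((hasDerivAt_const t (1:ℝ)).sub
          ((hasDerivAt_pow 2 t).div_const 2)).add
          ((hasDerivAt_pow 4 t).div_const 24)).sub ((hasDerivAt_pow 6 t).div_const 720))
        refine h.congr_deriv ?_; push_cast; ring
      convert this using 1; push_cast; ring)
    (by simp)
    (fun t ht => by linarith [sin_le_quintic t ht])
  intro u hu; linarith [this u hu]

lemma sin_ge_septic : ∀ u, 0 ≤ u → u - u^3/6 + u^5/120 - u^7/5040 ≤ sin u := by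
  have := nonneg_of_deriv (fun u => sin u - (u - u^3/6 + u^5/120 - u^7/5040))
    (fun u => cos u - (1 - u^2/2 + u^4/24 - u^6/720))
    (fun t => by
      have : HasDerivAt (fun u => sin u - (u - u^3/6 + u^5/120 - u^7/5040))
          (cos t - (1 - 3*t^2/6 + 5*t^4/120 - 7*t^6/5040)) t :=
        (Real.hasDerivAt_sin t).sub ((((hasDerivAt_id t).sub
          ((hasDerivAt_pow 3 t).div_const 6)).add
          ((hasDerivAt_pow 5 t).div_const 120)).sub ((hasDerivAt_pow 7 t).div_const 5040))
      convert this using 1; push_cast; ring)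
    (by simp)
    (fun t ht => by linarith [cos_ge_sextic t ht])
  intro u hu; linarith [this u hu]

lemma cos_le_octic : ∀ u, 0 ≤ u → cos u ≤ 1 - u^2/2 + u^4/24 - u^6/720 + u^8/40320 := by
  have := nonneg_of_deriv (fun u => 1 - u^2/2 + u^4/24 - u^6/720 + u^8/40320 - cos u)
    (fun u => sin u - (u - u^3/6 + u^5/120 - u^7/5040))
    (fun t => by
      have : HasDerivAt (fun u => 1 - u^2/2 + u^4/24 - u^6/720 + u^8/40320 - cos u)
          (0 - 2*t/2 + 4*t^3/24 - 6*t^5/720 + 8*t^7/40320 - (-sin t)) t := by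
        have h := (((((hasDerivAt_const t (1:ℝ)).sub ((hasDerivAt_pow 2 t).div_const 2)).add
          ((hasDerivAt_pow 4 t).div_const 24)).sub
          ((hasDerivAt_pow 6 t).div_const 720)).add
          ((hasDerivAt_pow 8 t).div_const 40320)).sub (Real.hasDerivAt_cos t)
        refine h.congr_deriv ?_; push_cast; ring
      convert this using 1; push_cast; ring)
    (by simp)
    (fun t ht => by linarith [sin_ge_septic t ht])
  intro u hu; linarith [this u hu]


lemma core_w (u : ℝ) (h0 : 0 < u) (h1 : u < π) : u^2 * sin u < 6 * (u - sin u) := by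
  have hs := sin_le_quintic u h0.le
  have hpi : u < 3.15 := h1.trans_le (by linarith [Real.pi_lt_d2])
  have h2 : u^2 * sin u ≤ u^2 * (u - u^3/6 + u^5/120) :=
    mul_le_mul_of_nonneg_left hs (sq_nonneg u)
  have h3 : u^2 < 14 := by nlinarith
  have h4 : u^5 * u^2 < u^5 * 14 := mul_lt_mul_of_pos_left h3 (pow_pos h0 5)
  nlinarith [pow_pos h0 5]

lemma core_q (u : ℝ) (h0 : 0 < u) (h1 : u < π) :
    u * sin u + u^2 * cos u < 2 * (sin u)^2 := by
  have hpi : u < 3.15 := h1.trans_le (by linarith [Real.pi_lt_d2])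
  have hs5 := sin_le_quintic u h0.le
  have hsn : 0 ≤ sin u := Real.sin_nonneg_of_nonneg_of_le_pi h0.le h1.le
  have hc8 := cos_le_octic u h0.le
  rcases le_or_gt u 2.4 with hc | hc
  · have hs3 := sin_ge_cubic u h0.le
    have hu2 : u^2 ≤ 5.76 := by nlinarith
    have hge : (0:ℝ) ≤ u - u^3/6 := by nlinarith [mul_le_mul_of_nonneg_left hu2 h0.le]
    have hc4 : cos u ≤ 1 - u^2/2 + u^4/24 := by
      have h6 : u^6 * u^2 ≤ u^6 * 5.76 := mul_le_mul_of_nonneg_left hu2 (by positivity)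
      nlinarith [pow_pos h0 6]
    have hsq : (u - u^3/6)^2 ≤ (sin u)^2 := by nlinarith
    have hus : u * sin u ≤ u * (u - u^3/6 + u^5/120) := mul_le_mul_of_nonneg_left hs5 h0.le
    have huc : u^2 * cos u ≤ u^2 * (1 - u^2/2 + u^4/24) := mul_le_mul_of_nonneg_left hc4 (sq_nonneg u)
    nlinarith [pow_pos h0 6]
  · have hus : u * sin u ≤ u * (u - u^3/6 + u^5/120) := mul_le_mul_of_nonneg_left hs5 h0.le
    have huc : u^2 * cos u ≤ u^2 * (1 - u^2/2 + u^4/24 - u^6/720 + u^8/40320) :=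
      mul_le_mul_of_nonneg_left hc8 (sq_nonneg u)
    have hA : (0:ℝ) ≤ u^2 - 5.76 := by nlinarith
    have hB : (0:ℝ) ≤ 9.9225 - u^2 := by nlinarith
    have key : 0 < -2 + (2/3)*u^2 - u^4/20 + u^6/720 - u^8/40320 := by
      nlinarith [mul_nonneg hA hB, mul_nonneg (mul_nonneg hA hB) hA,
        mul_nonneg (mul_nonneg hA hB) hB, mul_nonneg (mul_nonneg (mul_nonneg hA hB) hA) hB,
        sq_nonneg (u^2 - 7.8)]
    nlinarith [sq_nonneg (sin u), mul_pos (mul_pos h0 h0) key]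


noncomputable def Ftan (t : ℝ) : ℝ := Real.log (Real.tan t) - Real.log t

lemma sc_pos {t : ℝ} (ht : t ∈ Set.Ioo 0 (π/2)) : 0 < Real.sin t ∧ 0 < Real.cos t ∧ 0 < Real.tan t := by
  have hs : 0 < Real.sin t := Real.sin_pos_of_pos_of_lt_pi ht.1 (ht.2.trans (by linarith [Real.pi_pos]))
  have hc : 0 < Real.cos t := Real.cos_pos_of_mem_Ioo ⟨by linarith [ht.1, Real.pi_pos], ht.2⟩
  exact ⟨hs, hc, by rw [Real.tan_eq_sin_div_cos]; positivity⟩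

lemma hF_deriv {t : ℝ} (ht : t ∈ Set.Ioo 0 (π/2)) :
    HasDerivAt Ftan (1/(Real.sin t * Real.cos t) - 1/t) t := by
  obtain ⟨hs, hc, htan⟩ := sc_pos ht
  have h1 : HasDerivAt Real.tan (1 / Real.cos t ^ 2) t := Real.hasDerivAt_tan hc.ne'
  have h2 := h1.log htan.ne'
  have h3 := Real.hasDerivAt_log ht.1.ne'
  have h4 := h2.sub h3
  refine h4.congr_deriv ?_
  rw [Real.tan_eq_sin_div_cos]
  field_simp

lemma tendsto_tan_div : Tendsto (fun t => Real.tan t / t) (𝓝[>] (0:ℝ)) (𝓝 1) := by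
  have h : HasDerivAt Real.tan 1 0 := by
    have := Real.hasDerivAt_tan (by simp : Real.cos 0 ≠ 0)
    simpa using this
  have := hasDerivAt_iff_tendsto_slope.mp h
  have h2 := this.mono_left (nhdsWithin_mono 0 (fun y (hy : y ∈ Set.Ioi 0) => hy.ne' : Set.Ioi (0:ℝ) ⊆ {0}ᶜ))
  refine h2.congr' ?_
  filter_upwards [self_mem_nhdsWithin] with t (ht : 0 < t)
  simp [slope_def_field, Real.tan_zero]

lemma tendsto_div_sin : Tendsto (fun t => t / Real.sin t) (𝓝[>] (0:ℝ)) (𝓝 1) := by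
  have h : HasDerivAt Real.sin 1 0 := by simpa using Real.hasDerivAt_sin 0
  have := hasDerivAt_iff_tendsto_slope.mp h
  have h2 := this.mono_left (nhdsWithin_mono 0 (fun y (hy : y ∈ Set.Ioi 0) => hy.ne' : Set.Ioi (0:ℝ) ⊆ {0}ᶜ))
  have h3 : Tendsto (fun t => Real.sin t / t) (𝓝[>] (0:ℝ)) (𝓝 1) := by
    refine h2.congr' ?_
    filter_upwards [self_mem_nhdsWithin] with t (ht : 0 < t)
    simp [slope_def_field]
  have h4 := h3.inv₀ one_ne_zero
  simpa using h4.congr' (by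
    filter_upwards [self_mem_nhdsWithin] with t (ht : 0 < t)
    simp [div_eq_mul_inv, mul_comm])

lemma tendsto_F : Tendsto Ftan (𝓝[>] (0:ℝ)) (𝓝 0) := by
  have h1 : Tendsto (fun t => Real.log (Real.tan t / t)) (𝓝[>] (0:ℝ)) (𝓝 0) := by
    have := (Real.continuousAt_log one_ne_zero).tendsto.comp tendsto_tan_div
    simpa [Function.comp_def] using this
  refine h1.congr' ?_
  filter_upwards [Ioo_mem_nhdsGT_of_mem (by constructor <;> [rfl; positivity] : (0:ℝ) ∈ Set.Ico 0 (π/2))] with t ht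
  obtain ⟨hs, hc, htan⟩ := sc_pos ht
  rw [Real.log_div htan.ne' ht.1.ne']
  rfl





noncomputable def Wfun (t : ℝ) : ℝ := Ftan t - t^2/3
noncomputable def Qfun (t : ℝ) : ℝ := t / (Real.sin t * Real.cos t) - 1 - 2 * Ftan t

lemma hW_deriv {t : ℝ} (ht : t ∈ Set.Ioo 0 (π/2)) :
    HasDerivAt Wfun (1/(Real.sin t * Real.cos t) - 1/t - 2*t/3) t := by
  have h := (hF_deriv ht).sub ((hasDerivAt_pow 2 t).div_const 3)
  refine h.congr_deriv ?_
  push_cast; ring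

lemma hQ_deriv {t : ℝ} (ht : t ∈ Set.Ioo 0 (π/2)) :
    HasDerivAt Qfun ((Real.sin t * Real.cos t - t * (Real.cos t^2 - Real.sin t^2)) /
      (Real.sin t * Real.cos t)^2 - 2 * (1/(Real.sin t * Real.cos t) - 1/t)) t := by
  obtain ⟨hs, hc, -⟩ := sc_pos ht
  have ht0 : (0:ℝ) < t := ht.1
  have hs' : Real.sin t ≠ 0 := hs.ne'
  have hc' : Real.cos t ≠ 0 := hc.ne'
  have ht' : t ≠ 0 := ht0.ne'
  have hd : HasDerivAt (fun t => Real.sin t * Real.cos t)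
      (Real.cos t * Real.cos t + Real.sin t * (-Real.sin t)) t :=
    (Real.hasDerivAt_sin t).mul (Real.hasDerivAt_cos t)
  have hdiv := (hasDerivAt_id t).div hd (by positivity)
  have h := (hdiv.sub (hasDerivAt_const t (1:ℝ))).sub ((hF_deriv ht).const_mul 2)
  refine h.congr_deriv ?_
  simp only [id_eq, one_mul]
  ring

lemma W_deriv_pos {t : ℝ} (ht : t ∈ Set.Ioo 0 (π/2)) :
    0 < 1/(Real.sin t * Real.cos t) - 1/t - 2*t/3 := by
  obtain ⟨hs, hc, -⟩ := sc_pos ht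
  have ht0 : (0:ℝ) < t := ht.1
  have hs' : Real.sin t ≠ 0 := hs.ne'
  have hc' : Real.cos t ≠ 0 := hc.ne'
  have ht' : t ≠ 0 := ht0.ne'
  have hcw := core_w (2*t) (by linarith [ht.1]) (by linarith [ht.2])
  rw [Real.sin_two_mul] at hcw
  have heq : 1/(Real.sin t * Real.cos t) - 1/t - 2*t/3 =
      (3*t - 3*(Real.sin t * Real.cos t) - 2*t^2*(Real.sin t * Real.cos t)) /
      (3*t*(Real.sin t * Real.cos t)) := by
    field_simp
  rw [heq]
  apply div_pos
  · nlinarith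
  · positivity

lemma Q_deriv_pos {t : ℝ} (ht : t ∈ Set.Ioo 0 (π/2)) :
    0 < (Real.sin t * Real.cos t - t * (Real.cos t^2 - Real.sin t^2)) /
      (Real.sin t * Real.cos t)^2 - 2 * (1/(Real.sin t * Real.cos t) - 1/t) := by
  obtain ⟨hs, hc, -⟩ := sc_pos ht
  have ht0 : (0:ℝ) < t := ht.1
  have hs' : Real.sin t ≠ 0 := hs.ne'
  have hc' : Real.cos t ≠ 0 := hc.ne'
  have ht' : t ≠ 0 := ht0.ne'
  have hcq := core_q (2*t) (by linarith [ht.1]) (by linarith [ht.2])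
  rw [Real.sin_two_mul, Real.cos_two_mul'] at hcq
  have heq : (Real.sin t * Real.cos t - t * (Real.cos t^2 - Real.sin t^2)) /
      (Real.sin t * Real.cos t)^2 - 2 * (1/(Real.sin t * Real.cos t) - 1/t) =
      (2*(Real.sin t * Real.cos t)^2 - t*(Real.sin t * Real.cos t)
        - t^2*(Real.cos t^2 - Real.sin t^2)) / (t * (Real.sin t * Real.cos t)^2) := by
    field_simp
    ring
  rw [heq]
  apply div_pos
  · nlinarith
  · positivity

lemma pos_on (f : ℝ → ℝ) (hm : StrictMonoOn f (Set.Ioo 0 (π/2)))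
    (hl : Tendsto f (𝓝[>] (0:ℝ)) (𝓝 0)) {x : ℝ} (hx : x ∈ Set.Ioo 0 (π/2)) : 0 < f x := by
  have hx2 : x/2 ∈ Set.Ioo 0 (π/2) := ⟨by linarith [hx.1], by linarith [hx.1, hx.2]⟩
  have h1 : f (x/2) < f x := hm hx2 hx (by linarith [hx.1])
  have h2 : 0 ≤ f (x/2) := by
    refine le_of_tendsto hl ?_
    filter_upwards [Ioo_mem_nhdsGT_of_mem
      (⟨le_refl _, by linarith [hx.1]⟩ : (0:ℝ) ∈ Set.Ico 0 (x/2))] with t ht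
    exact (hm ⟨ht.1, by linarith [ht.2, hx.2, hx.1]⟩ hx2 ht.2).le
  linarith

lemma W_mono : StrictMonoOn Wfun (Set.Ioo 0 (π/2)) := by
  apply strictMonoOn_of_deriv_pos (convex_Ioo 0 (π/2))
    (fun t ht => (hW_deriv ht).continuousAt.continuousWithinAt)
  intro t ht
  rw [interior_Ioo] at ht
  rw [(hW_deriv ht).deriv]
  exact W_deriv_pos ht

lemma Q_mono : StrictMonoOn Qfun (Set.Ioo 0 (π/2)) := by
  apply strictMonoOn_of_deriv_pos (convex_Ioo 0 (π/2))
    (fun t ht => (hQ_deriv ht).continuousAt.continuousWithinAt)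
  intro t ht
  rw [interior_Ioo] at ht
  rw [(hQ_deriv ht).deriv]
  exact Q_deriv_pos ht

lemma tendsto_W : Tendsto Wfun (𝓝[>] (0:ℝ)) (𝓝 0) := by
  have h := tendsto_F.sub (((continuous_pow 2).tendsto' (0:ℝ) 0 (by simp)).div_const 3 |>.mono_left nhdsWithin_le_nhds)
  exact (by simpa using h : Tendsto (fun t => Ftan t - t^2/3) (𝓝[>] (0:ℝ)) (𝓝 0))

lemma tendsto_Q : Tendsto Qfun (𝓝[>] (0:ℝ)) (𝓝 0) := by
  have hcos : Tendsto (fun t => (Real.cos t)⁻¹) (𝓝[>] (0:ℝ)) (𝓝 1) := by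
    have := ((Real.continuous_cos.tendsto' (0:ℝ) 1 (by simp)).inv₀ one_ne_zero).mono_left
      (nhdsWithin_le_nhds : 𝓝[>] (0:ℝ) ≤ 𝓝 0)
    simpa using this
  have h1 : Tendsto (fun t => t / (Real.sin t * Real.cos t)) (𝓝[>] (0:ℝ)) (𝓝 1) := by
    have := tendsto_div_sin.mul hcos
    rw [show (1:ℝ) = 1 * 1 by norm_num]
    refine this.congr (fun t => ?_)
    simp [div_eq_mul_inv, mul_inv]
    ring
  have h2 := (h1.sub_const 1).sub (tendsto_F.const_mul 2)
  have h3 : Tendsto (fun t => t / (Real.sin t * Real.cos t) - 1 - 2 * Ftan t) (𝓝[>] (0:ℝ)) (𝓝 0) := by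
    simpa using h2
  exact h3


lemma W_pos : ∀ {x : ℝ}, x ∈ Set.Ioo 0 (π/2) → 0 < Wfun x :=
  fun hx => pos_on Wfun W_mono tendsto_W hx

lemma Q_pos : ∀ {x : ℝ}, x ∈ Set.Ioo 0 (π/2) → 0 < Qfun x :=
  fun hx => pos_on Qfun Q_mono tendsto_Q hx


noncomputable def Gfun (t : ℝ) : ℝ := Ftan t / t^2


lemma hG_deriv {t : ℝ} (ht : t ∈ Set.Ioo 0 (π/2)) :
    HasDerivAt Gfun ((t * Qfun t) / t^4) t := by
  obtain ⟨hs, hc, -⟩ := sc_pos ht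
  have ht0 : (0:ℝ) < t := ht.1
  have hs' : Real.sin t ≠ 0 := hs.ne'
  have hc' : Real.cos t ≠ 0 := hc.ne'
  have ht' : t ≠ 0 := ht0.ne'
  have h := (hF_deriv ht).div (hasDerivAt_pow 2 t) (by positivity)
  refine h.congr_deriv ?_
  simp only [Qfun]
  push_cast
  field_simp

lemma G_mono : StrictMonoOn Gfun (Set.Ioo 0 (π/2)) := by
  apply strictMonoOn_of_deriv_pos (convex_Ioo 0 (π/2))
    (fun t ht => (hG_deriv ht).continuousAt.continuousWithinAt)
  intro t ht
  rw [interior_Ioo] at ht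
  rw [(hG_deriv ht).deriv]
  have ht0 : (0:ℝ) < t := ht.1
  exact div_pos (mul_pos ht0 (Q_pos ht)) (by positivity)

/-- `exp((ln(b/tan b)/b²) x²) < x/tan x < exp(−x²/3)` for `b ∈ (0, π/2)` and `x ∈ (0, b)`. -/
theorem exp_bounds_div_tan (b x : ℝ) (hb : b ∈ Set.Ioo 0 (Real.pi / 2))
    (hx : x ∈ Set.Ioo 0 b) :
    Real.exp ((Real.log (b / Real.tan b) / b ^ 2) * x ^ 2) < x / Real.tan x ∧
    x / Real.tan x < Real.exp (-x ^ 2 / 3) := by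
  have hxI : x ∈ Set.Ioo 0 (π/2) := ⟨hx.1, hx.2.trans hb.2⟩
  obtain ⟨hsx, hcx, htx⟩ := sc_pos hxI
  obtain ⟨hsb, hcb, htb⟩ := sc_pos hb
  have hx0 : (0:ℝ) < x := hx.1
  have hb0 : (0:ℝ) < b := hb.1
  have hxtan : x / Real.tan x = Real.exp (-Ftan x) := by
    rw [show -Ftan x = Real.log x - Real.log (Real.tan x) by simp [Ftan, neg_sub],
      Real.exp_sub, Real.exp_log hx0, Real.exp_log htx]
  have hlogb : Real.log (b / Real.tan b) = -Ftan b := by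
    rw [Real.log_div hb0.ne' htb.ne']; simp [Ftan]
  constructor
  · rw [hxtan, hlogb, Real.exp_lt_exp]
    have hG : Ftan x / x^2 < Ftan b / b^2 := G_mono hxI hb hx.2
    have h2 : Ftan x < Ftan b / b^2 * x^2 := by
      calc Ftan x = Ftan x / x^2 * x^2 := by field_simp
        _ < Ftan b / b^2 * x^2 := mul_lt_mul_of_pos_right hG (by positivity)
    have h3 : -Ftan b / b^2 * x^2 = -(Ftan b / b^2 * x^2) := by ring
    linarith
  · rw [hxtan, Real.exp_lt_exp]
    have hw := W_pos hxI
    simp only [Wfun] at hw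
    linarith
end

section
/- For every c > 0 and every x ∈ (0, c), one has exp(−x²/6) < x/sinh(x) < exp((ln(c/sinh c)/c²)·x²). -/
open Real Filter Set Topology

/-- Helper: a function vanishing at 0 with positive derivative on `(0,∞)` is positive there. -/
lemma aux_pos_of_deriv_pos (f f' : ℝ → ℝ) (hf : ∀ x, HasDerivAt f (f' x) x)
    (h0 : f 0 = 0) (hpos : ∀ x, 0 < x → 0 < f' x) : ∀ x, 0 < x → 0 < f x := by
  intro x hx
  have hmono : StrictMonoOn f (Set.Ici 0) := by
    apply strictMonoOn_of_deriv_pos (convex_Ici 0)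
      (fun y _ => (hf y).continuousAt.continuousWithinAt)
    intro y hy
    rw [interior_Ici] at hy
    rw [(hf y).deriv]
    exact hpos y hy
  have := hmono (Set.self_mem_Ici) (Set.mem_Ici.mpr hx.le) hx
  rwa [h0] at this

lemma aux_sinh_lt (x : ℝ) (hx : 0 < x) : Real.sinh x < x * Real.cosh x := by
  have key := aux_pos_of_deriv_pos (fun y => y * Real.cosh y - Real.sinh y)
    (fun y => y * Real.sinh y) ?_ (by simp) ?_ x hx
  · linarith
  · intro y
    have h := ((hasDerivAt_id y).mul (Real.hasDerivAt_cosh y)).sub (Real.hasDerivAt_sinh y)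
    refine h.congr_deriv ?_
    simp only [id_eq]
    ring
  · intro y hy
    exact mul_pos hy (Real.sinh_pos_iff.mpr hy)

lemma aux_k2 (x : ℝ) (hx : 0 < x) : 0 < x * Real.sinh x + 2 - 2 * Real.cosh x := by
  refine aux_pos_of_deriv_pos (fun y => y * Real.sinh y + 2 - 2 * Real.cosh y)
    (fun y => y * Real.cosh y - Real.sinh y) ?_ (by simp) ?_ x hx
  · intro y
    have h := (((hasDerivAt_id y).mul (Real.hasDerivAt_sinh y)).add_const 2).sub
      ((Real.hasDerivAt_cosh y).const_mul 2)
    refine h.congr_deriv ?_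
    simp only [id_eq]
    ring
  · intro y hy
    linarith [aux_sinh_lt y hy]

lemma aux_k1 (x : ℝ) (hx : 0 < x) : 0 < x * Real.cosh x + 2 * x - 3 * Real.sinh x := by
  refine aux_pos_of_deriv_pos (fun y => y * Real.cosh y + 2 * y - 3 * Real.sinh y)
    (fun y => y * Real.sinh y + 2 - 2 * Real.cosh y) ?_ (by simp) ?_ x hx
  · intro y
    have h := (((hasDerivAt_id y).mul (Real.hasDerivAt_cosh y)).add
      ((hasDerivAt_id y).const_mul 2)).sub ((Real.hasDerivAt_sinh y).const_mul 3)
    refine h.congr_deriv ?_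
    simp only [id_eq]
    ring
  · intro y hy
    exact aux_k2 y hy

lemma aux_k (x : ℝ) (hx : 0 < x) :
    0 < x * Real.sinh x + x ^ 2 + 4 - 4 * Real.cosh x := by
  refine aux_pos_of_deriv_pos (fun y => y * Real.sinh y + y ^ 2 + 4 - 4 * Real.cosh y)
    (fun y => y * Real.cosh y + 2 * y - 3 * Real.sinh y) ?_ (by simp) ?_ x hx
  · intro y
    have h := ((((hasDerivAt_id y).mul (Real.hasDerivAt_sinh y)).add
      (hasDerivAt_pow 2 y)).add_const 4).sub ((Real.hasDerivAt_cosh y).const_mul 4)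
    refine h.congr_deriv ?_
    simp only [id_eq]
    ring
  · intro y hy
    exact aux_k1 y hy

lemma aux_a2 (x : ℝ) (hx : 0 < x) :
    0 < (x ^ 2 + 3) * Real.sinh x - 3 * x * Real.cosh x := by
  refine aux_pos_of_deriv_pos (fun y => (y ^ 2 + 3) * Real.sinh y - 3 * y * Real.cosh y)
    (fun y => y * (y * Real.cosh y - Real.sinh y)) ?_ (by simp) ?_ x hx
  · intro y
    have h := (((hasDerivAt_pow 2 y).add_const 3).mul (Real.hasDerivAt_sinh y)).sub
      (((hasDerivAt_id y).const_mul 3).mul (Real.hasDerivAt_cosh y))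
    refine h.congr_deriv ?_
    simp only [id_eq]
    ring
  · intro y hy
    have := aux_sinh_lt y hy
    exact mul_pos hy (by linarith)

/-- `sinh x / x → 1` as `x → 0⁺`. -/
lemma aux_sinh_div_lim : Tendsto (fun x : ℝ => Real.sinh x / x) (𝓝[>] 0) (𝓝 1) := by
  have h := hasDerivAt_iff_tendsto_slope.mp (Real.hasDerivAt_sinh 0)
  rw [Real.cosh_zero] at h
  have h2 : Tendsto (slope Real.sinh 0) (𝓝[>] (0:ℝ)) (𝓝 1) :=
    h.mono_left (nhdsWithin_mono 0 (fun y hy => ne_of_gt hy))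
  refine h2.congr' ?_
  filter_upwards [self_mem_nhdsWithin] with y hy
  simp only [slope, Real.sinh_zero, vsub_eq_sub, sub_zero, smul_eq_mul]
  ring

lemma aux_log_sinh_lim :
    Tendsto (fun x : ℝ => Real.log (Real.sinh x) - Real.log x) (𝓝[>] 0) (𝓝 0) := by
  have h : Tendsto (fun x : ℝ => Real.log (Real.sinh x / x)) (𝓝[>] 0) (𝓝 0) := by
    have := (Real.continuousAt_log (one_ne_zero)).tendsto.comp aux_sinh_div_lim
    rwa [Real.log_one] at this
  refine h.congr' ?_
  filter_upwards [self_mem_nhdsWithin] with y hy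
  rw [Real.log_div (Real.sinh_pos_iff.mpr hy).ne' (ne_of_gt hy)]

lemma aux_xcoth_lim :
    Tendsto (fun x : ℝ => x * Real.cosh x / Real.sinh x) (𝓝[>] 0) (𝓝 1) := by
  have h1 : Tendsto (fun x : ℝ => (Real.sinh x / x)⁻¹) (𝓝[>] 0) (𝓝 1) := by
    have := aux_sinh_div_lim.inv₀ one_ne_zero
    simpa using this
  have h2 : Tendsto (fun x : ℝ => Real.cosh x) (𝓝[>] (0:ℝ)) (𝓝 1) := by
    have hcont : Tendsto Real.cosh (𝓝 (0:ℝ)) (𝓝 1) := by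
      simpa using Real.continuous_cosh.tendsto 0
    exact hcont.mono_left nhdsWithin_le_nhds
  have h3 := h1.mul h2
  rw [one_mul] at h3
  refine h3.congr' ?_
  filter_upwards [self_mem_nhdsWithin] with y hy
  have hs := (Real.sinh_pos_iff.mpr hy).ne'
  have hy0 : y ≠ 0 := ne_of_gt hy
  rw [inv_div]
  field_simp

/-- Helper for functions defined on `(0,∞)`: positive derivative + limit 0 at 0⁺ ⟹ positive. -/
lemma aux_pos_of_deriv_pos_Ioi (f f' : ℝ → ℝ) (hf : ∀ x, 0 < x → HasDerivAt f (f' x) x)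
    (hpos : ∀ x, 0 < x → 0 < f' x) (hlim : Tendsto f (𝓝[>] 0) (𝓝 0)) :
    ∀ x, 0 < x → 0 < f x := by
  have hmono : StrictMonoOn f (Set.Ioi 0) := by
    apply strictMonoOn_of_deriv_pos (convex_Ioi 0)
      (fun y hy => ((hf y hy).continuousAt.continuousWithinAt))
    intro y hy
    rw [interior_Ioi] at hy
    rw [(hf y hy).deriv]
    exact hpos y hy
  intro x hx
  have hx2 : (0:ℝ) < x / 2 := by linarith
  have hle : 0 ≤ f (x / 2) := by
    refine le_of_tendsto hlim ?_
    filter_upwards [Ioo_mem_nhdsGT_of_mem (by constructor <;> linarith :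
      (0:ℝ) ∈ Set.Ico 0 (x / 2))] with t ht
    exact hmono.monotoneOn (Set.mem_Ioi.mpr ht.1) (Set.mem_Ioi.mpr hx2) ht.2.le
  have := hmono (Set.mem_Ioi.mpr hx2) (Set.mem_Ioi.mpr hx) (by linarith)
  linarith

/-- First bound: `-x²/6 < log x - log (sinh x)` for `x > 0`. -/
lemma aux_psi_pos (x : ℝ) (hx : 0 < x) :
    0 < x ^ 2 / 6 + Real.log x - Real.log (Real.sinh x) := by
  refine aux_pos_of_deriv_pos_Ioi
    (fun y => y ^ 2 / 6 + Real.log y - Real.log (Real.sinh y))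
    (fun y => ((y ^ 2 + 3) * Real.sinh y - 3 * y * Real.cosh y) / (3 * y * Real.sinh y))
    ?_ ?_ ?_ x hx
  · intro y hy
    have hs : Real.sinh y ≠ 0 := (Real.sinh_pos_iff.mpr hy).ne'
    have hlogs : HasDerivAt (fun z => Real.log (Real.sinh z)) ((Real.sinh y)⁻¹ * Real.cosh y) y :=
      (Real.hasDerivAt_log hs).comp y (Real.hasDerivAt_sinh y)
    have h := (((hasDerivAt_pow 2 y).div_const 6).add (Real.hasDerivAt_log (ne_of_gt hy))).sub
      hlogs
    refine h.congr_deriv ?_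
    field_simp
    ring
  · intro y hy
    exact div_pos (aux_a2 y hy) (by positivity)
  · have h1 : Tendsto (fun y : ℝ => y ^ 2 / 6) (𝓝[>] 0) (𝓝 0) := by
      have := ((continuous_pow 2).div_const 6).tendsto (0:ℝ)
      simpa using this.mono_left nhdsWithin_le_nhds
    have := h1.sub aux_log_sinh_lim
    simp only [sub_zero, zero_sub, sub_neg_eq_add] at this ⊢
    refine this.congr (fun y => by ring)

/-- `G(x) = 1 - x cosh x / sinh x - 2 log x + 2 log (sinh x) > 0` for `x > 0`. -/
lemma aux_G_pos (x : ℝ) (hx : 0 < x) :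
    0 < 1 - x * Real.cosh x / Real.sinh x - 2 * Real.log x + 2 * Real.log (Real.sinh x) := by
  refine aux_pos_of_deriv_pos_Ioi
    (fun y => 1 - y * Real.cosh y / Real.sinh y - 2 * Real.log y + 2 * Real.log (Real.sinh y))
    (fun y => (y * Real.sinh y * Real.cosh y + y ^ 2 - 2 * Real.sinh y ^ 2) /
      (y * Real.sinh y ^ 2)) ?_ ?_ ?_ x hx
  · intro y hy
    have hs : Real.sinh y ≠ 0 := (Real.sinh_pos_iff.mpr hy).ne'
    have hsq : Real.cosh y ^ 2 = Real.sinh y ^ 2 + 1 := Real.cosh_sq y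
    have hlogs : HasDerivAt (fun z => Real.log (Real.sinh z)) ((Real.sinh y)⁻¹ * Real.cosh y) y :=
      (Real.hasDerivAt_log hs).comp y (Real.hasDerivAt_sinh y)
    have hq : HasDerivAt (fun z => z * Real.cosh z / Real.sinh z)
        (((1 * Real.cosh y + y * Real.sinh y) * Real.sinh y - y * Real.cosh y * Real.cosh y) /
          Real.sinh y ^ 2) y :=
      ((hasDerivAt_id y).mul (Real.hasDerivAt_cosh y)).div (Real.hasDerivAt_sinh y) hs
    have h := (((hasDerivAt_const y (1:ℝ)).sub hq).sub
      ((Real.hasDerivAt_log (ne_of_gt hy)).const_mul 2)).add (hlogs.const_mul 2)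
    refine h.congr_deriv ?_
    field_simp
    ring_nf
    rw [Real.cosh_sq]
    ring
  · intro y hy
    apply div_pos _ (by positivity)
    have hk := aux_k (2 * y) (by linarith)
    rw [Real.sinh_two_mul, Real.cosh_two_mul] at hk
    have hsq : Real.cosh y ^ 2 = Real.sinh y ^ 2 + 1 := Real.cosh_sq y
    nlinarith
  · have ha : Tendsto (fun y : ℝ => (1:ℝ) - y * Real.cosh y / Real.sinh y)
        (𝓝[>] (0:ℝ)) (𝓝 (1 - 1)) := tendsto_const_nhds.sub aux_xcoth_lim
    have hb := aux_log_sinh_lim.const_mul (2:ℝ)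
    have h1 := ha.add hb
    norm_num at h1
    refine h1.congr (fun y => by ring)

/-- `exp(−x²/6) < x/sinh x < exp((ln(c/sinh c)/c²) x²)` for `c > 0` and `x ∈ (0, c)`. -/
theorem exp_bounds_div_sinh (c x : ℝ) (hc : 0 < c) (hx : x ∈ Set.Ioo 0 c) :
    Real.exp (-x ^ 2 / 6) < x / Real.sinh x ∧
    x / Real.sinh x < Real.exp ((Real.log (c / Real.sinh c) / c ^ 2) * x ^ 2) := by
  obtain ⟨hx0, hxc⟩ := hx
  have hsx : 0 < Real.sinh x := Real.sinh_pos_iff.mpr hx0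
  have hsc : 0 < Real.sinh c := Real.sinh_pos_iff.mpr hc
  have hxpos : 0 < x / Real.sinh x := div_pos hx0 hsx
  have hFx : Real.log (x / Real.sinh x) = Real.log x - Real.log (Real.sinh x) :=
    Real.log_div hx0.ne' hsx.ne'
  have hFc : Real.log (c / Real.sinh c) = Real.log c - Real.log (Real.sinh c) :=
    Real.log_div hc.ne' hsc.ne'
  constructor
  · have h := aux_psi_pos x hx0
    have : -x ^ 2 / 6 < Real.log (x / Real.sinh x) := by rw [hFx]; linarith
    calc Real.exp (-x ^ 2 / 6) < Real.exp (Real.log (x / Real.sinh x)) :=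
          Real.exp_lt_exp.mpr this
      _ = x / Real.sinh x := Real.exp_log hxpos
  · -- strict monotonicity of g(y) = (log y - log sinh y)/y²
    have hmono : StrictMonoOn
        (fun y => (Real.log y - Real.log (Real.sinh y)) / y ^ 2) (Set.Ioi 0) := by
      apply strictMonoOn_of_deriv_pos (convex_Ioi 0)
      · intro y hy
        have hy0 : (0:ℝ) < y := hy
        have hs : Real.sinh y ≠ 0 := (Real.sinh_pos_iff.mpr hy0).ne'
        have hcont : ContinuousAt (fun y => (Real.log y - Real.log (Real.sinh y)) / y ^ 2) y := by
          apply ContinuousAt.div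
          · exact (Real.continuousAt_log (ne_of_gt hy0)).sub
              ((Real.continuousAt_log hs).comp Real.continuous_sinh.continuousAt)
          · exact (continuous_pow 2).continuousAt
          · positivity
        exact hcont.continuousWithinAt
      · intro y hy
        rw [interior_Ioi] at hy
        have hy0 : (0:ℝ) < y := hy
        have hs : Real.sinh y ≠ 0 := (Real.sinh_pos_iff.mpr hy0).ne'
        have hlogs : HasDerivAt (fun z => Real.log (Real.sinh z))
            ((Real.sinh y)⁻¹ * Real.cosh y) y :=
          (Real.hasDerivAt_log hs).comp y (Real.hasDerivAt_sinh y)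
        have hd : HasDerivAt (fun y => (Real.log y - Real.log (Real.sinh y)) / y ^ 2)
            ((1 - y * Real.cosh y / Real.sinh y - 2 * Real.log y +
              2 * Real.log (Real.sinh y)) / y ^ 3) y := by
          have h := ((Real.hasDerivAt_log (ne_of_gt hy0)).sub hlogs).div
            (hasDerivAt_pow 2 y) (by positivity)
          refine h.congr_deriv ?_
          simp only [Pi.sub_apply]
          field_simp
          ring
        rw [hd.deriv]
        exact div_pos (aux_G_pos y hy0) (by positivity)
    have hg := hmono (Set.mem_Ioi.mpr hx0) (Set.mem_Ioi.mpr hc) hxc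
    simp only at hg
    have hkey : Real.log x - Real.log (Real.sinh x) <
        (Real.log c - Real.log (Real.sinh c)) / c ^ 2 * x ^ 2 := by
      rw [div_mul_eq_mul_div, lt_div_iff₀ (by positivity)]
      rw [div_lt_div_iff₀ (by positivity) (by positivity)] at hg
      linarith
    calc x / Real.sinh x = Real.exp (Real.log (x / Real.sinh x)) := (Real.exp_log hxpos).symm
      _ < Real.exp (Real.log (c / Real.sinh c) / c ^ 2 * x ^ 2) := by
          rw [Real.exp_lt_exp, hFx, hFc]; exact hkey
end

section
/- For every d > 0 and every x ∈ (0, d), one has exp((ln(cosh d)/d²)·x²) < cosh(x) < exp(x²/2). -/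
open Real

/-- `sinh t < t * cosh t` for `t > 0`. -/
lemma aux_sinh_lt_mul_cosh {t : ℝ} (ht : 0 < t) : Real.sinh t < t * Real.cosh t := by
  have key : StrictMonoOn (fun s : ℝ => s * Real.cosh s - Real.sinh s) (Set.Ici 0) := by
    apply strictMonoOn_of_deriv_pos (convex_Ici 0)
    · fun_prop
    · intro s hs
      rw [interior_Ici, Set.mem_Ioi] at hs
      have h : HasDerivAt (fun s : ℝ => s * Real.cosh s - Real.sinh s)
          (1 * Real.cosh s + s * Real.sinh s - Real.cosh s) s :=
        ((hasDerivAt_id s).mul (Real.hasDerivAt_cosh s)).sub (Real.hasDerivAt_sinh s)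
      rw [h.deriv]
      have := Real.sinh_pos_iff.2 hs
      nlinarith
  have := key (Set.self_mem_Ici) (Set.mem_Ici.2 ht.le) ht
  simpa using this

/-- strict version of `cosh_le_exp_half_sq`. -/
lemma aux_cosh_lt_exp_half_sq {t : ℝ} (ht : 0 < t) : Real.cosh t < Real.exp (t ^ 2 / 2) := by
  have key : StrictMonoOn (fun s : ℝ => Real.exp (s ^ 2 / 2) - Real.cosh s) (Set.Ici 0) := by
    apply strictMonoOn_of_deriv_pos (convex_Ici 0)
    · fun_prop
    · intro s hs
      rw [interior_Ici, Set.mem_Ioi] at hs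
      have h1 : HasDerivAt (fun s : ℝ => s ^ 2 / 2) ((2 * s ^ 1) / 2) s := by
        exact (hasDerivAt_pow 2 s).div_const 2
      have h : HasDerivAt (fun s : ℝ => Real.exp (s ^ 2 / 2) - Real.cosh s)
          (Real.exp (s ^ 2 / 2) * ((2 * s ^ 1) / 2) - Real.sinh s) s :=
        (h1.exp).sub (Real.hasDerivAt_cosh s)
      rw [h.deriv]
      have h2 : Real.sinh s < s * Real.cosh s := aux_sinh_lt_mul_cosh hs
      have h3 : Real.cosh s ≤ Real.exp (s ^ 2 / 2) := Real.cosh_le_exp_half_sq s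
      have : s * Real.cosh s ≤ s * Real.exp (s ^ 2 / 2) := by nlinarith
      simp only [pow_one]
      nlinarith
  have := key (Set.self_mem_Ici) (Set.mem_Ici.2 ht.le) ht
  simp only [Real.cosh_zero, ne_eq, OfNat.ofNat_ne_zero, not_false_eq_true, zero_pow,
    zero_div, Real.exp_zero, sub_self] at this
  linarith

/-- `t * sinh t / cosh t - 2 * log (cosh t) < 0` for `t > 0`. -/
lemma aux_g_neg {t : ℝ} (ht : 0 < t) :
    t * Real.sinh t / Real.cosh t - 2 * Real.log (Real.cosh t) < 0 := by
  have key : StrictAntiOn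
      (fun s : ℝ => s * Real.sinh s / Real.cosh s - 2 * Real.log (Real.cosh s)) (Set.Ici 0) := by
    apply strictAntiOn_of_deriv_neg (convex_Ici 0)
    · apply Continuous.continuousOn
      fun_prop (disch := exact fun s => (Real.cosh_pos s).ne')
    · intro s hs
      rw [interior_Ici, Set.mem_Ioi] at hs
      have hc := Real.cosh_pos s
      have h1 : HasDerivAt (fun s : ℝ => s * Real.sinh s / Real.cosh s)
          (((1 * Real.sinh s + s * Real.cosh s) * Real.cosh s -
            s * Real.sinh s * Real.sinh s) / Real.cosh s ^ 2) s :=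
        ((hasDerivAt_id s).mul (Real.hasDerivAt_sinh s)).div (Real.hasDerivAt_cosh s) hc.ne'
      have h2 : HasDerivAt (fun s : ℝ => 2 * Real.log (Real.cosh s))
          (2 * (Real.sinh s / Real.cosh s)) s := by
        exact ((Real.hasDerivAt_cosh s).log hc.ne').const_mul 2
      have h : HasDerivAt
          (fun s : ℝ => s * Real.sinh s / Real.cosh s - 2 * Real.log (Real.cosh s))
          (((1 * Real.sinh s + s * Real.cosh s) * Real.cosh s -
            s * Real.sinh s * Real.sinh s) / Real.cosh s ^ 2 -
            2 * (Real.sinh s / Real.cosh s)) s := h1.sub h2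
      rw [h.deriv]
      have hsinh : s < Real.sinh s := Real.self_lt_sinh_iff.2 hs
      have hone : 1 ≤ Real.cosh s := Real.one_le_cosh s
      have hident : Real.cosh s ^ 2 - Real.sinh s ^ 2 = 1 := Real.cosh_sq_sub_sinh_sq s
      have hs2 : s < Real.sinh s * Real.cosh s := by nlinarith [Real.sinh_pos_iff.2 hs]
      have heq : ((1 * Real.sinh s + s * Real.cosh s) * Real.cosh s -
            s * Real.sinh s * Real.sinh s) / Real.cosh s ^ 2 -
            2 * (Real.sinh s / Real.cosh s)
          = (s - Real.sinh s * Real.cosh s) / Real.cosh s ^ 2 := by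
        field_simp
        linear_combination s * hident
      rw [heq]
      apply div_neg_of_neg_of_pos (by linarith) (by positivity)
  have := key (Set.self_mem_Ici) (Set.mem_Ici.2 ht.le) ht
  simpa using this

/-- `log (cosh t) / t ^ 2` is strictly decreasing on `(0, ∞)`. -/
lemma aux_strictAnti : StrictAntiOn (fun t : ℝ => Real.log (Real.cosh t) / t ^ 2) (Set.Ioi 0) := by
  apply strictAntiOn_of_deriv_neg (convex_Ioi 0)
  · apply ContinuousOn.div
    · apply Continuous.continuousOn; fun_prop (disch := exact fun s => (Real.cosh_pos s).ne')
    · fun_prop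
    · intro s hs; exact pow_ne_zero 2 (ne_of_gt hs)
  · rw [interior_Ioi]
    intro s hs
    rw [Set.mem_Ioi] at hs
    have hc := Real.cosh_pos s
    have h1 : HasDerivAt (fun t : ℝ => Real.log (Real.cosh t)) (Real.sinh s / Real.cosh s) s :=
      (Real.hasDerivAt_cosh s).log hc.ne'
    have h2 : HasDerivAt (fun t : ℝ => t ^ 2) (2 * s ^ 1) s := hasDerivAt_pow 2 s
    have h : HasDerivAt (fun t : ℝ => Real.log (Real.cosh t) / t ^ 2)
        ((Real.sinh s / Real.cosh s * s ^ 2 - Real.log (Real.cosh s) * (2 * s ^ 1)) /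
          (s ^ 2) ^ 2) s := h1.div h2 (pow_ne_zero 2 hs.ne')
    rw [h.deriv]
    apply div_neg_of_neg_of_pos _ (by positivity)
    have hg := aux_g_neg hs
    have heq : Real.sinh s / Real.cosh s * s ^ 2 - Real.log (Real.cosh s) * (2 * s ^ 1)
        = s * (s * Real.sinh s / Real.cosh s - 2 * Real.log (Real.cosh s)) := by
      field_simp
    rw [heq]
    exact mul_neg_of_pos_of_neg hs hg

/-- `exp((ln(cosh d)/d²) x²) < cosh x < exp(x²/2)` for `d > 0` and `x ∈ (0, d)`. -/
theorem exp_bounds_cosh (d x : ℝ) (hd : 0 < d) (hx : x ∈ Set.Ioo 0 d) :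
    Real.exp ((Real.log (Real.cosh d) / d ^ 2) * x ^ 2) < Real.cosh x ∧
    Real.cosh x < Real.exp (x ^ 2 / 2) := by
  obtain ⟨hx0, hxd⟩ := hx
  constructor
  · have hmono := aux_strictAnti (Set.mem_Ioi.2 hx0) (Set.mem_Ioi.2 (hx0.trans hxd)) hxd
    have hx2 : (0:ℝ) < x ^ 2 := by positivity
    have h1 : Real.log (Real.cosh d) / d ^ 2 * x ^ 2 < Real.log (Real.cosh x) := by
      have := (div_lt_div_iff_of_pos_right hx2).mpr hmono
      calc Real.log (Real.cosh d) / d ^ 2 * x ^ 2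
          < Real.log (Real.cosh x) / x ^ 2 * x ^ 2 := by
            exact mul_lt_mul_of_pos_right hmono hx2
        _ = Real.log (Real.cosh x) := by field_simp
    calc Real.exp (Real.log (Real.cosh d) / d ^ 2 * x ^ 2)
        < Real.exp (Real.log (Real.cosh x)) := Real.exp_lt_exp.2 h1
      _ = Real.cosh x := Real.exp_log (Real.cosh_pos x)
  · exact aux_cosh_lt_exp_half_sq hx0
end

section
/- For every m > 0 and every x ∈ (0, m), one has exp(−x²/3) < tanh(x)/x < exp((ln((tanh m)/m)/m²)·x²). -/
open Real

private lemma pos_of_deriv_pos (f f' : ℝ → ℝ)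
    (hd : ∀ y : ℝ, HasDerivAt f (f' y) y) (h0 : f 0 = 0)
    (hp : ∀ y : ℝ, 0 < y → 0 < f' y) : ∀ y : ℝ, 0 < y → 0 < f y := by
  intro y hy
  have hmono : StrictMonoOn f (Set.Ici 0) := by
    apply strictMonoOn_of_deriv_pos (convex_Ici 0)
    · exact fun x _ => (hd x).continuousAt.continuousWithinAt
    · intro x hx
      rw [interior_Ici] at hx
      rw [(hd x).deriv]
      exact hp x hx
  have := hmono (Set.self_mem_Ici) (Set.mem_Ici.2 hy.le) hy
  rwa [h0] at this

private lemma cosh_quad (y : ℝ) (hy : 0 ≤ y) : 1 + y ^ 2 / 2 ≤ Real.cosh y := by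
  rcases eq_or_lt_of_le hy with h | h
  · simp [← h]
  have := pos_of_deriv_pos (fun y => Real.cosh y - 1 - y ^ 2 / 2) (fun y => Real.sinh y - y)
    (fun y => by
      have := ((Real.hasDerivAt_cosh y).sub_const 1).sub
        (((hasDerivAt_pow 2 y)).div_const 2)
      refine this.congr_deriv ?_
      norm_num)
    (by simp)
    (fun y hy => by
      have := Real.self_lt_sinh_iff.2 hy
      show 0 < Real.sinh y - y
      linarith) y h
  linarith

private lemma wpos (y : ℝ) (hy : 0 < y) :
    0 < Real.cosh (2 * y) - 1 - y * Real.sinh y - y ^ 2 * Real.cosh y := by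
  -- chain of 6 derivatives
  have d1 : ∀ z : ℝ, HasDerivAt (fun y => Real.cosh (2 * y) - 1 - y * Real.sinh y - y ^ 2 * Real.cosh y)
      (2 * Real.sinh (2 * z) - Real.sinh z - 3 * z * Real.cosh z - z ^ 2 * Real.sinh z) z := by
    intro z
    have h2 : HasDerivAt (fun y : ℝ => Real.cosh (2 * y)) (Real.sinh (2 * z) * 2) z :=
      (Real.hasDerivAt_cosh (2 * z)).comp z (by simpa using (hasDerivAt_id z).const_mul 2)
    have h3 : HasDerivAt (fun y : ℝ => y * Real.sinh y) (1 * Real.sinh z + z * Real.cosh z) z :=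
      (hasDerivAt_id z).mul (Real.hasDerivAt_sinh z)
    have h4 : HasDerivAt (fun y : ℝ => y ^ 2 * Real.cosh y)
        (2 * z ^ 1 * Real.cosh z + z ^ 2 * Real.sinh z) z := by
      refine ((hasDerivAt_pow 2 z).mul (Real.hasDerivAt_cosh z)).congr_deriv ?_
      norm_num
    refine (((h2.sub_const 1).sub h3).sub h4).congr_deriv ?_
    ring
  have d2 : ∀ z : ℝ, HasDerivAt (fun y => 2 * Real.sinh (2 * y) - Real.sinh y - 3 * y * Real.cosh y - y ^ 2 * Real.sinh y)
      (4 * Real.cosh (2 * z) - 4 * Real.cosh z - 5 * z * Real.sinh z - z ^ 2 * Real.cosh z) z := by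
    intro z
    have h2 : HasDerivAt (fun y : ℝ => 2 * Real.sinh (2 * y)) (2 * (Real.cosh (2 * z) * 2)) z :=
      (((Real.hasDerivAt_sinh (2 * z)).comp z (by simpa using (hasDerivAt_id z).const_mul 2))).const_mul 2
    have h3 : HasDerivAt (fun y : ℝ => 3 * y * Real.cosh y) (3 * Real.cosh z + 3 * z * Real.sinh z) z := by
      have := ((hasDerivAt_id z).const_mul 3).mul (Real.hasDerivAt_cosh z)
      refine this.congr_deriv ?_
      simp only [id_eq]; ring
    have h4 : HasDerivAt (fun y : ℝ => y ^ 2 * Real.sinh y)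
        (2 * z ^ 1 * Real.sinh z + z ^ 2 * Real.cosh z) z := by
      refine ((hasDerivAt_pow 2 z).mul (Real.hasDerivAt_sinh z)).congr_deriv ?_
      norm_num
    refine (((h2.sub (Real.hasDerivAt_sinh z)).sub h3).sub h4).congr_deriv ?_
    ring
  have d3 : ∀ z : ℝ, HasDerivAt (fun y => 4 * Real.cosh (2 * y) - 4 * Real.cosh y - 5 * y * Real.sinh y - y ^ 2 * Real.cosh y)
      (8 * Real.sinh (2 * z) - 9 * Real.sinh z - 7 * z * Real.cosh z - z ^ 2 * Real.sinh z) z := by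
    intro z
    have h2 : HasDerivAt (fun y : ℝ => 4 * Real.cosh (2 * y)) (4 * (Real.sinh (2 * z) * 2)) z :=
      ((Real.hasDerivAt_cosh (2 * z)).comp z (by simpa using (hasDerivAt_id z).const_mul 2)).const_mul 4
    have h3 : HasDerivAt (fun y : ℝ => 5 * y * Real.sinh y) (5 * Real.sinh z + 5 * z * Real.cosh z) z := by
      have := ((hasDerivAt_id z).const_mul 5).mul (Real.hasDerivAt_sinh z)
      refine this.congr_deriv ?_
      simp only [id_eq]; ring
    have h4 : HasDerivAt (fun y : ℝ => y ^ 2 * Real.cosh y)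
        (2 * z ^ 1 * Real.cosh z + z ^ 2 * Real.sinh z) z := by
      refine ((hasDerivAt_pow 2 z).mul (Real.hasDerivAt_cosh z)).congr_deriv ?_
      norm_num
    refine (((h2.sub ((Real.hasDerivAt_cosh z).const_mul 4)).sub h3).sub h4).congr_deriv ?_
    ring
  have d4 : ∀ z : ℝ, HasDerivAt (fun y => 8 * Real.sinh (2 * y) - 9 * Real.sinh y - 7 * y * Real.cosh y - y ^ 2 * Real.sinh y)
      (16 * Real.cosh (2 * z) - 16 * Real.cosh z - 9 * z * Real.sinh z - z ^ 2 * Real.cosh z) z := by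
    intro z
    have h2 : HasDerivAt (fun y : ℝ => 8 * Real.sinh (2 * y)) (8 * (Real.cosh (2 * z) * 2)) z :=
      ((Real.hasDerivAt_sinh (2 * z)).comp z (by simpa using (hasDerivAt_id z).const_mul 2)).const_mul 8
    have h3 : HasDerivAt (fun y : ℝ => 7 * y * Real.cosh y) (7 * Real.cosh z + 7 * z * Real.sinh z) z := by
      have := ((hasDerivAt_id z).const_mul 7).mul (Real.hasDerivAt_cosh z)
      refine this.congr_deriv ?_
      simp only [id_eq]; ring
    have h4 : HasDerivAt (fun y : ℝ => y ^ 2 * Real.sinh y)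
        (2 * z ^ 1 * Real.sinh z + z ^ 2 * Real.cosh z) z := by
      refine ((hasDerivAt_pow 2 z).mul (Real.hasDerivAt_sinh z)).congr_deriv ?_
      norm_num
    refine (((h2.sub ((Real.hasDerivAt_sinh z).const_mul 9)).sub h3).sub h4).congr_deriv ?_
    ring
  have d5 : ∀ z : ℝ, HasDerivAt (fun y => 16 * Real.cosh (2 * y) - 16 * Real.cosh y - 9 * y * Real.sinh y - y ^ 2 * Real.cosh y)
      (32 * Real.sinh (2 * z) - 25 * Real.sinh z - 11 * z * Real.cosh z - z ^ 2 * Real.sinh z) z := by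
    intro z
    have h2 : HasDerivAt (fun y : ℝ => 16 * Real.cosh (2 * y)) (16 * (Real.sinh (2 * z) * 2)) z :=
      ((Real.hasDerivAt_cosh (2 * z)).comp z (by simpa using (hasDerivAt_id z).const_mul 2)).const_mul 16
    have h3 : HasDerivAt (fun y : ℝ => 9 * y * Real.sinh y) (9 * Real.sinh z + 9 * z * Real.cosh z) z := by
      have := ((hasDerivAt_id z).const_mul 9).mul (Real.hasDerivAt_sinh z)
      refine this.congr_deriv ?_
      simp only [id_eq]; ring
    have h4 : HasDerivAt (fun y : ℝ => y ^ 2 * Real.cosh y)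
        (2 * z ^ 1 * Real.cosh z + z ^ 2 * Real.sinh z) z := by
      refine ((hasDerivAt_pow 2 z).mul (Real.hasDerivAt_cosh z)).congr_deriv ?_
      norm_num
    refine (((h2.sub ((Real.hasDerivAt_cosh z).const_mul 16)).sub h3).sub h4).congr_deriv ?_
    ring
  have d6 : ∀ z : ℝ, HasDerivAt (fun y => 32 * Real.sinh (2 * y) - 25 * Real.sinh y - 11 * y * Real.cosh y - y ^ 2 * Real.sinh y)
      (64 * Real.cosh (2 * z) - 36 * Real.cosh z - 13 * z * Real.sinh z - z ^ 2 * Real.cosh z) z := by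
    intro z
    have h2 : HasDerivAt (fun y : ℝ => 32 * Real.sinh (2 * y)) (32 * (Real.cosh (2 * z) * 2)) z :=
      ((Real.hasDerivAt_sinh (2 * z)).comp z (by simpa using (hasDerivAt_id z).const_mul 2)).const_mul 32
    have h3 : HasDerivAt (fun y : ℝ => 11 * y * Real.cosh y) (11 * Real.cosh z + 11 * z * Real.sinh z) z := by
      have := ((hasDerivAt_id z).const_mul 11).mul (Real.hasDerivAt_cosh z)
      refine this.congr_deriv ?_
      simp only [id_eq]; ring
    have h4 : HasDerivAt (fun y : ℝ => y ^ 2 * Real.sinh y)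
        (2 * z ^ 1 * Real.sinh z + z ^ 2 * Real.cosh z) z := by
      refine ((hasDerivAt_pow 2 z).mul (Real.hasDerivAt_sinh z)).congr_deriv ?_
      norm_num
    refine (((h2.sub ((Real.hasDerivAt_sinh z).const_mul 25)).sub h3).sub h4).congr_deriv ?_
    ring
  have w6pos : ∀ z : ℝ, 0 < z →
      0 < 64 * Real.cosh (2 * z) - 36 * Real.cosh z - 13 * z * Real.sinh z - z ^ 2 * Real.cosh z := by
    intro z hz
    have hc2 : Real.cosh (2 * z) = Real.cosh z ^ 2 + Real.sinh z ^ 2 := Real.cosh_two_mul z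
    have h1 : Real.cosh z ^ 2 - Real.sinh z ^ 2 = 1 := Real.cosh_sq_sub_sinh_sq z
    have hs : Real.sinh z < Real.cosh z := by
      nlinarith [Real.exp_pos (-z), Real.cosh_sub_sinh z]
    have hsn : 0 < Real.sinh z := Real.sinh_pos_iff.2 hz
    have hq : 1 + z ^ 2 / 2 ≤ Real.cosh z := cosh_quad z hz.le
    nlinarith [sq_nonneg (z - 13 / 62), sq_nonneg z, mul_pos hz hsn,
      mul_lt_mul_of_pos_left hs hz, Real.one_le_cosh z,
      mul_le_mul_of_nonneg_left hq (by positivity : (0:ℝ) ≤ Real.cosh z)]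
  have w5 := pos_of_deriv_pos _ _ d6 (by simp) w6pos
  have w4 := pos_of_deriv_pos _ _ d5 (by simp) w5
  have w3 := pos_of_deriv_pos _ _ d4 (by simp) w4
  have w2 := pos_of_deriv_pos _ _ d3 (by simp) w3
  have w1 := pos_of_deriv_pos _ _ d2 (by simp) w2
  exact pos_of_deriv_pos _ _ d1 (by simp) w1 y hy

private lemma tanh_lower (x : ℝ) (hx : 0 < x) :
    0 < (3 + x ^ 2) * Real.sinh x - 3 * x * Real.cosh x := by
  have hA := pos_of_deriv_pos (fun x => x * Real.cosh x - Real.sinh x)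
    (fun x => x * Real.sinh x)
    (fun z => by
      have := ((hasDerivAt_id z).mul (Real.hasDerivAt_cosh z)).sub (Real.hasDerivAt_sinh z)
      refine this.congr_deriv ?_
      simp only [id_eq]; ring)
    (by simp)
    (fun z hz => mul_pos hz (Real.sinh_pos_iff.2 hz))
  refine pos_of_deriv_pos (fun x => (3 + x ^ 2) * Real.sinh x - 3 * x * Real.cosh x)
    (fun x => x * (x * Real.cosh x - Real.sinh x))
    (fun z => by
      have h1 : HasDerivAt (fun y : ℝ => (3 + y ^ 2)) (2 * z ^ 1) z :=
        (hasDerivAt_pow 2 z).const_add 3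
      have h2 := (h1.mul (Real.hasDerivAt_sinh z)).sub
        (((hasDerivAt_id z).const_mul 3).mul (Real.hasDerivAt_cosh z))
      refine h2.congr_deriv ?_
      simp only [id_eq]; ring)
    (by simp)
    (fun z hz => mul_pos hz (hA z hz)) x hx

private lemma phi_hasDeriv (x : ℝ) (hx : 0 < x) :
    HasDerivAt (fun x => 2 * x / Real.sinh (2 * x) - 1 - 2 * Real.log (Real.sinh x)
        + 2 * Real.log (Real.cosh x) + 2 * Real.log x)
      ((Real.cosh (2 * (2 * x)) - 1 - 2 * x * Real.sinh (2 * x)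
        - (2 * x) ^ 2 * Real.cosh (2 * x)) / (x * Real.sinh (2 * x) ^ 2)) x := by
  have hs : Real.sinh x ≠ 0 := (Real.sinh_pos_iff.2 hx).ne'
  have hc : Real.cosh x ≠ 0 := (Real.cosh_pos x).ne'
  have hs2 : Real.sinh (2 * x) ≠ 0 := (Real.sinh_pos_iff.2 (by linarith)).ne'
  have h2x : HasDerivAt (fun y : ℝ => Real.sinh (2 * y)) (Real.cosh (2 * x) * 2) x :=
    (Real.hasDerivAt_sinh (2 * x)).comp x (by simpa using (hasDerivAt_id x).const_mul 2)
  have hdiv : HasDerivAt (fun y : ℝ => 2 * y / Real.sinh (2 * y))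
      ((2 * Real.sinh (2 * x) - 2 * x * (Real.cosh (2 * x) * 2)) / Real.sinh (2 * x) ^ 2) x := by
    have hnum : HasDerivAt (fun y : ℝ => 2 * y) 2 x := by
      simpa using (hasDerivAt_id x).const_mul 2
    exact hnum.div h2x hs2
  have hlogs : HasDerivAt (fun y : ℝ => Real.log (Real.sinh y)) (Real.cosh x / Real.sinh x) x :=
    (Real.hasDerivAt_sinh x).log hs
  have hlogc : HasDerivAt (fun y : ℝ => Real.log (Real.cosh y)) (Real.sinh x / Real.cosh x) x :=
    (Real.hasDerivAt_cosh x).log hc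
  have hlogx : HasDerivAt Real.log x⁻¹ x := Real.hasDerivAt_log hx.ne'
  have h := ((((hdiv.sub_const 1).sub (hlogs.const_mul 2)).add
    (hlogc.const_mul 2)).add (hlogx.const_mul 2))
  refine h.congr_deriv ?_
  have e2 : Real.sinh (2 * x) = 2 * Real.sinh x * Real.cosh x := Real.sinh_two_mul x
  have e3 : Real.cosh (2 * x) = Real.cosh x ^ 2 + Real.sinh x ^ 2 := Real.cosh_two_mul x
  have e4 : Real.cosh (2 * (2 * x)) = Real.cosh (2 * x) ^ 2 + Real.sinh (2 * x) ^ 2 :=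
    Real.cosh_two_mul (2 * x)
  have e5 : Real.cosh x ^ 2 - Real.sinh x ^ 2 = 1 := Real.cosh_sq_sub_sinh_sq x
  rw [e4, e2, e3]
  field_simp
  linear_combination (-8 * x * Real.sinh x * Real.cosh x
    - (Real.cosh x ^ 2 - Real.sinh x ^ 2 + 1)) * e5

private lemma phi_lim :
    Filter.Tendsto (fun x => 2 * x / Real.sinh (2 * x) - 1 - 2 * Real.log (Real.sinh x)
      + 2 * Real.log (Real.cosh x) + 2 * Real.log x) (nhdsWithin 0 (Set.Ioi 0)) (nhds 0) := by
  have hslope : Filter.Tendsto (fun y : ℝ => Real.sinh y / y)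
      (nhdsWithin 0 {(0:ℝ)}ᶜ) (nhds 1) := by
    have h := Real.hasDerivAt_sinh 0
    rw [hasDerivAt_iff_tendsto_slope] at h
    simp only [slope_fun_def, vsub_eq_sub, Real.sinh_zero, sub_zero, smul_eq_mul,
      Real.cosh_zero] at h
    exact h.congr fun y => inv_mul_eq_div _ _
  have hmap : Filter.Tendsto (fun x : ℝ => 2 * x) (nhdsWithin 0 (Set.Ioi 0))
      (nhdsWithin 0 {(0:ℝ)}ᶜ) := by
    apply tendsto_nhdsWithin_of_tendsto_nhds_of_eventually_within
    · have h : Filter.Tendsto (fun x : ℝ => 2 * x) (nhds 0) (nhds (2 * 0)) :=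
        (continuous_const.mul continuous_id).tendsto 0
      simpa using h.mono_left nhdsWithin_le_nhds
    · filter_upwards [self_mem_nhdsWithin] with x hx
      simp only [Set.mem_compl_iff, Set.mem_singleton_iff]
      have : (0:ℝ) < x := hx
      positivity
  have T2x : Filter.Tendsto (fun x : ℝ => Real.sinh (2 * x) / (2 * x))
      (nhdsWithin 0 (Set.Ioi 0)) (nhds 1) := hslope.comp hmap
  have T1 : Filter.Tendsto (fun x : ℝ => 2 * x / Real.sinh (2 * x))
      (nhdsWithin 0 (Set.Ioi 0)) (nhds 1) := by
    have h := T2x.inv₀ one_ne_zero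
    simpa only [inv_div, inv_one] using h
  have Tsx : Filter.Tendsto (fun x : ℝ => Real.sinh x / x)
      (nhdsWithin 0 (Set.Ioi 0)) (nhds 1) :=
    hslope.mono_left (nhdsWithin_mono 0 (fun x hx => by
      simp only [Set.mem_compl_iff, Set.mem_singleton_iff]
      exact ne_of_gt hx))
  have Tlog1 : Filter.Tendsto (fun x : ℝ => Real.log (Real.sinh x / x))
      (nhdsWithin 0 (Set.Ioi 0)) (nhds 0) := by
    have h := (Real.continuousAt_log one_ne_zero).tendsto.comp Tsx
    simpa [Function.comp_def] using h
  have Tlog2 : Filter.Tendsto (fun x : ℝ => Real.log (Real.cosh x))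
      (nhdsWithin 0 (Set.Ioi 0)) (nhds 0) := by
    have h : ContinuousAt (fun x : ℝ => Real.log (Real.cosh x)) 0 :=
      (Real.continuousAt_log (by simp)).comp Real.continuous_cosh.continuousAt
    have h2 : Filter.Tendsto (fun x : ℝ => Real.log (Real.cosh x))
        (nhdsWithin 0 (Set.Ioi 0)) (nhds (Real.log (Real.cosh 0))) :=
      h.tendsto.mono_left nhdsWithin_le_nhds
    simpa using h2
  have T0 : Filter.Tendsto (fun x : ℝ => 2 * x / Real.sinh (2 * x) - 1
      - 2 * Real.log (Real.sinh x / x) + 2 * Real.log (Real.cosh x))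
      (nhdsWithin 0 (Set.Ioi 0)) (nhds 0) := by
    have h : Filter.Tendsto (fun x : ℝ => 2 * x / Real.sinh (2 * x) - 1
        - 2 * Real.log (Real.sinh x / x) + 2 * Real.log (Real.cosh x))
        (nhdsWithin 0 (Set.Ioi 0)) (nhds (1 - 1 - 2 * 0 + 2 * 0)) :=
      ((T1.sub tendsto_const_nhds).sub (Tlog1.const_mul 2)).add (Tlog2.const_mul 2)
    norm_num at h
    exact h
  apply T0.congr'
  filter_upwards [self_mem_nhdsWithin] with x hx
  have hx' : (0:ℝ) < x := hx
  rw [Real.log_div (Real.sinh_pos_iff.2 hx').ne' hx'.ne']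
  ring

private lemma phi_pos_s15 (x : ℝ) (hx : 0 < x) :
    0 < 2 * x / Real.sinh (2 * x) - 1 - 2 * Real.log (Real.sinh x)
      + 2 * Real.log (Real.cosh x) + 2 * Real.log x := by
  have hmono : StrictMonoOn (fun x => 2 * x / Real.sinh (2 * x) - 1
      - 2 * Real.log (Real.sinh x) + 2 * Real.log (Real.cosh x) + 2 * Real.log x)
      (Set.Ioi 0) := by
    apply strictMonoOn_of_deriv_pos (convex_Ioi 0)
    · exact fun z hz => (phi_hasDeriv z hz).continuousAt.continuousWithinAt
    · intro z hz
      rw [interior_Ioi] at hz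
      have hz' : (0:ℝ) < z := hz
      rw [(phi_hasDeriv z hz').deriv]
      apply div_pos (wpos (2 * z) (by linarith))
      have h : 0 < Real.sinh (2 * z) := Real.sinh_pos_iff.2 (by linarith)
      positivity
  have hnonneg : ∀ z ∈ Set.Ioi (0:ℝ), 0 ≤ 2 * z / Real.sinh (2 * z) - 1
      - 2 * Real.log (Real.sinh z) + 2 * Real.log (Real.cosh z) + 2 * Real.log z := by
    intro z hz
    refine le_of_tendsto phi_lim ?_
    filter_upwards [Ioo_mem_nhdsGT_of_mem ⟨le_refl 0, hz⟩] with y hy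
    exact (hmono hy.1 hz hy.2).le
  have h1 := hmono (Set.mem_Ioi.2 (half_pos hx)) (Set.mem_Ioi.2 hx) (half_lt_self hx)
  have h2 := hnonneg (x / 2) (Set.mem_Ioi.2 (half_pos hx))
  exact lt_of_le_of_lt h2 h1

private lemma g_hasDeriv (x : ℝ) (hx : 0 < x) :
    HasDerivAt (fun x => (Real.log (Real.sinh x) - Real.log (Real.cosh x) - Real.log x) / x ^ 2)
      ((2 * x / Real.sinh (2 * x) - 1 - 2 * Real.log (Real.sinh x)
        + 2 * Real.log (Real.cosh x) + 2 * Real.log x) / x ^ 3) x := by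
  have hs : Real.sinh x ≠ 0 := (Real.sinh_pos_iff.2 hx).ne'
  have hc : Real.cosh x ≠ 0 := (Real.cosh_pos x).ne'
  have hlogs : HasDerivAt (fun y : ℝ => Real.log (Real.sinh y)) (Real.cosh x / Real.sinh x) x :=
    (Real.hasDerivAt_sinh x).log hs
  have hlogc : HasDerivAt (fun y : ℝ => Real.log (Real.cosh y)) (Real.sinh x / Real.cosh x) x :=
    (Real.hasDerivAt_cosh x).log hc
  have hlogx : HasDerivAt Real.log x⁻¹ x := Real.hasDerivAt_log hx.ne'
  have h := ((hlogs.sub hlogc).sub hlogx).div (hasDerivAt_pow 2 x) (pow_ne_zero 2 hx.ne')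
  refine h.congr_deriv ?_
  have e2 : Real.sinh (2 * x) = 2 * Real.sinh x * Real.cosh x := Real.sinh_two_mul x
  have e5 : Real.cosh x ^ 2 - Real.sinh x ^ 2 = 1 := Real.cosh_sq_sub_sinh_sq x
  rw [e2]
  simp only [Pi.sub_apply]
  field_simp
  linear_combination x ^ 2 * e5

/-- `exp(−x²/3) < tanh x / x < exp((ln((tanh m)/m)/m²) x²)` for `m > 0` and `x ∈ (0, m)`. -/
theorem exp_bounds_tanh_div (m x : ℝ) (hm : 0 < m) (hx : x ∈ Set.Ioo 0 m) :
    Real.exp (-x ^ 2 / 3) < Real.tanh x / x ∧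
    Real.tanh x / x < Real.exp ((Real.log (Real.tanh m / m) / m ^ 2) * x ^ 2) := by
  obtain ⟨hx0, hxm⟩ := hx
  have hsx : 0 < Real.sinh x := Real.sinh_pos_iff.2 hx0
  have hcx := Real.cosh_pos x
  have htx : 0 < Real.tanh x := by rw [Real.tanh_eq_sinh_div_cosh]; positivity
  constructor
  · have hB := tanh_lower x hx0
    have h1 : 3 * x / (3 + x ^ 2) < Real.tanh x := by
      rw [Real.tanh_eq_sinh_div_cosh, div_lt_div_iff₀ (by positivity) hcx]
      nlinarith [hB]
    have h2 : Real.exp (-x ^ 2 / 3) < 3 / (3 + x ^ 2) := by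
      have h3 : 1 + x ^ 2 / 3 < Real.exp (x ^ 2 / 3) := by
        have h4 := Real.add_one_lt_exp (ne_of_gt (by positivity : (0:ℝ) < x ^ 2 / 3))
        linarith
      rw [show -x ^ 2 / 3 = -(x ^ 2 / 3) by ring, Real.exp_neg,
        show (3:ℝ) / (3 + x ^ 2) = ((3 + x ^ 2) / 3)⁻¹ by rw [inv_div]]
      apply inv_strictAnti₀ (by positivity)
      linarith
    have h4 : 3 / (3 + x ^ 2) < Real.tanh x / x := by
      rw [lt_div_iff₀ hx0, div_mul_eq_mul_div]
      exact h1
    exact h2.trans h4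
  · have hsm : 0 < Real.sinh m := Real.sinh_pos_iff.2 hm
    have hcm := Real.cosh_pos m
    have htm : 0 < Real.tanh m := by rw [Real.tanh_eq_sinh_div_cosh]; positivity
    have hg : StrictMonoOn
        (fun x => (Real.log (Real.sinh x) - Real.log (Real.cosh x) - Real.log x) / x ^ 2)
        (Set.Ioi 0) := by
      apply strictMonoOn_of_deriv_pos (convex_Ioi 0)
      · intro z hz
        exact (g_hasDeriv z hz).continuousAt.continuousWithinAt
      · intro z hz
        rw [interior_Ioi] at hz
        have hz' : (0:ℝ) < z := hz
        rw [(g_hasDeriv z hz').deriv]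
        exact div_pos (phi_pos_s15 z hz') (by positivity)
    have hgx := hg (Set.mem_Ioi.2 hx0) (Set.mem_Ioi.2 hm) hxm
    simp only at hgx
    have hlx : Real.log (Real.tanh x / x)
        = Real.log (Real.sinh x) - Real.log (Real.cosh x) - Real.log x := by
      rw [Real.tanh_eq_sinh_div_cosh, Real.log_div (by positivity) hx0.ne',
        Real.log_div hsx.ne' hcx.ne']
    have hlm : Real.log (Real.tanh m / m)
        = Real.log (Real.sinh m) - Real.log (Real.cosh m) - Real.log m := by
      rw [Real.tanh_eq_sinh_div_cosh, Real.log_div (by positivity) hm.ne',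
        Real.log_div hsm.ne' hcm.ne']
    have key : Real.log (Real.tanh x / x) < Real.log (Real.tanh m / m) / m ^ 2 * x ^ 2 := by
      rw [hlx, hlm]
      calc Real.log (Real.sinh x) - Real.log (Real.cosh x) - Real.log x
          = (Real.log (Real.sinh x) - Real.log (Real.cosh x) - Real.log x) / x ^ 2 * x ^ 2 := by
            field_simp
        _ < (Real.log (Real.sinh m) - Real.log (Real.cosh m) - Real.log m) / m ^ 2 * x ^ 2 :=
            mul_lt_mul_of_pos_right hgx (by positivity)
    calc Real.tanh x / x = Real.exp (Real.log (Real.tanh x / x)) :=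
          (Real.exp_log (by positivity)).symm
      _ < Real.exp (Real.log (Real.tanh m / m) / m ^ 2 * x ^ 2) := Real.exp_lt_exp.2 key
end

section
/- For every real number p > 1, the limit as y → 0⁺ of ln(y/arcsinₚ(y))/y^p equals −1/(p(p+1)). (Equivalently, ln(sinₚ(x)/x)/x^p → −1/(p(p+1)) as x → 0⁺.) -/
open Real

/-- The generalized inverse sine: `arcsinp p y = ∫₀^y (1 - t^p)^(-1/p) dt`. -/
noncomputable def arcsinp (p y : ℝ) : ℝ := ∫ t in (0:ℝ)..y, (1 - t ^ p) ^ (-1 / p)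

section aux

variable {p : ℝ}

lemma aux_pow_lt_one (hp : 0 < p) {t : ℝ} (ht : t ∈ Set.Ioo (-1:ℝ) 1) : t ^ p < 1 := by
  have h1 : |t ^ p| ≤ |t| ^ p := Real.abs_rpow_le_abs_rpow t p
  have h2 : |t| ^ p < 1 := by
    rcases eq_or_ne t 0 with rfl | ht0
    · set_option linter.unnecessarySimpa false in simpa [Real.zero_rpow hp.ne'] using one_pos
    · exact Real.rpow_lt_one (abs_nonneg t) (abs_lt.mpr ⟨ht.1, ht.2⟩) hp
  calc t ^ p ≤ |t ^ p| := le_abs_self _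
    _ ≤ |t| ^ p := h1
    _ < 1 := h2

lemma aux_contAt (hp : 0 < p) {t : ℝ} (ht : t ∈ Set.Ioo (-1:ℝ) 1) :
    ContinuousAt (fun t : ℝ => (1 - t ^ p) ^ (-1 / p)) t := by
  have h1 : ContinuousAt (fun t : ℝ => 1 - t ^ p) t :=
    continuousAt_const.sub (Real.continuousAt_rpow_const t p (Or.inr hp.le))
  have h2 : (1 : ℝ) - t ^ p ≠ 0 := by
    have := aux_pow_lt_one hp ht; linarith
  exact h1.rpow_const (Or.inl h2)

lemma aux_hasDerivAt (hp : 0 < p) {y : ℝ} (hy : y ∈ Set.Ioo (0:ℝ) 1) :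
    HasDerivAt (arcsinp p) ((1 - y ^ p) ^ (-1 / p)) y := by
  have hmem : y ∈ Set.Ioo (-1:ℝ) 1 := ⟨by linarith [hy.1], hy.2⟩
  have hcont : ContinuousOn (fun t : ℝ => (1 - t ^ p) ^ (-1 / p)) (Set.Ioo (-1:ℝ) 1) :=
    fun t ht => (aux_contAt hp ht).continuousWithinAt
  have hint : IntervalIntegrable (fun t : ℝ => (1 - t ^ p) ^ (-1 / p)) MeasureTheory.volume 0 y := by
    apply (hcont.mono ?_).intervalIntegrable
    rw [Set.uIcc_of_le hy.1.le]
    intro t ht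
    exact ⟨by linarith [ht.1], lt_of_le_of_lt ht.2 hy.2⟩
  have hmeas : StronglyMeasurableAtFilter (fun t : ℝ => (1 - t ^ p) ^ (-1 / p))
      (nhds y) MeasureTheory.volume :=
    ContinuousOn.stronglyMeasurableAtFilter isOpen_Ioo hcont y hmem
  exact intervalIntegral.integral_hasDerivAt_right hint hmeas (aux_contAt hp hmem)

lemma aux_tendsto_zero (hp : 0 < p) :
    Filter.Tendsto (arcsinp p) (nhdsWithin 0 (Set.Ioi 0)) (nhds 0) := by
  have hcont : ContinuousOn (fun t : ℝ => (1 - t ^ p) ^ (-1 / p)) (Set.Icc (0:ℝ) (1/2)) := by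
    intro t ht
    exact (aux_contAt hp ⟨by linarith [ht.1], by linarith [ht.2]⟩).continuousWithinAt
  have hint : MeasureTheory.IntegrableOn (fun t : ℝ => (1 - t ^ p) ^ (-1 / p))
      (Set.uIcc (0:ℝ) (1/2)) MeasureTheory.volume := by
    rw [Set.uIcc_of_le (by norm_num : (0:ℝ) ≤ 1/2)]
    exact hcont.integrableOn_compact isCompact_Icc
  have h := intervalIntegral.continuousOn_primitive_interval hint
  have h0 : (0:ℝ) ∈ Set.uIcc (0:ℝ) (1/2) := Set.left_mem_uIcc
  have hcw := (h 0 h0).tendsto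
  rw [Set.uIcc_of_le (by norm_num : (0:ℝ) ≤ 1/2)] at hcw
  have : arcsinp p 0 = 0 := by simp [arcsinp]
  rw [show (∫ t in (0:ℝ)..(0:ℝ), (1 - t ^ p) ^ (-1 / p)) = 0 by simp] at hcw
  have hmono : nhdsWithin (0:ℝ) (Set.Ioi 0) ≤ nhdsWithin 0 (Set.Icc (0:ℝ) (1/2)) := by
    rw [← nhdsWithin_Ioo_eq_nhdsGT (by norm_num : (0:ℝ) < 1/2)]
    exact nhdsWithin_mono _ Set.Ioo_subset_Icc_self
  exact (hcw.mono_left hmono).congr (fun y => rfl)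

/-- slope limit: `((1-s)^(-1/p) - 1)/s → 1/p` as `s → 0`, `s ≠ 0`. -/
lemma aux_slope (hp : 0 < p) :
    Filter.Tendsto (fun s : ℝ => ((1 - s) ^ (-1 / p) - 1) / s)
      (nhdsWithin 0 {(0:ℝ)}ᶜ) (nhds (1 / p)) := by
  have hder : HasDerivAt (fun s : ℝ => (1 - s) ^ (-1 / p)) (1 / p) 0 := by
    have h1 : HasDerivAt (fun s : ℝ => 1 - s) (-1) 0 := by
      simpa using (hasDerivAt_id' (0:ℝ)).const_sub (1:ℝ)
    have h2 := h1.rpow_const (p := -1/p) (Or.inl (by norm_num))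
    convert h2 using 1
    field_simp
    simp
  have := hasDerivAt_iff_tendsto_slope.mp hder
  refine this.congr' ?_
  filter_upwards [self_mem_nhdsWithin] with s hs
  simp [slope_def_field, Real.one_rpow]

lemma aux_rpow_tendsto (hp : 0 < p) :
    Filter.Tendsto (fun y : ℝ => y ^ p) (nhdsWithin 0 (Set.Ioi 0))
      (nhdsWithin 0 {(0:ℝ)}ᶜ) := by
  rw [tendsto_nhdsWithin_iff]
  constructor
  · have := (Real.continuousAt_rpow_const 0 p (Or.inr hp.le)).tendsto
    rw [Real.zero_rpow hp.ne'] at this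
    exact this.mono_left nhdsWithin_le_nhds
  · filter_upwards [self_mem_nhdsWithin] with y hy
    exact (Real.rpow_pos_of_pos hy p).ne'

/-- main asymptotic: `(arcsinₚ y − y)/y^(p+1) → 1/(p(p+1))`. -/
lemma aux_vlim (hp : 1 < p) :
    Filter.Tendsto (fun y : ℝ => (arcsinp p y - y) / y ^ (p + 1))
      (nhdsWithin 0 (Set.Ioi 0)) (nhds (1 / (p * (p + 1)))) := by
  have hp0 : 0 < p := lt_trans one_pos hp
  apply HasDerivAt.lhopital_zero_right_on_Ioo (a := (0:ℝ)) (b := 1)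
    (f' := fun y => (1 - y ^ p) ^ (-1 / p) - 1) (g' := fun y => (p + 1) * y ^ p) one_pos
  · intro x hx
    exact (aux_hasDerivAt hp0 hx).sub (hasDerivAt_id x)
  · intro x hx
    have := Real.hasDerivAt_rpow_const (x := x) (p := p + 1) (Or.inl hx.1.ne')
    simpa [add_sub_cancel_right] using this
  · intro x hx
    have hx0 : (0:ℝ) < x ^ p := Real.rpow_pos_of_pos hx.1 p
    positivity
  · have h := aux_tendsto_zero hp0
    have h2 : Filter.Tendsto (fun y : ℝ => y) (nhdsWithin (0:ℝ) (Set.Ioi 0)) (nhds 0) :=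
      Filter.tendsto_id.mono_left nhdsWithin_le_nhds
    simpa using h.sub h2
  · have : Filter.Tendsto (fun y : ℝ => y ^ (p+1)) (nhdsWithin (0:ℝ) (Set.Ioi 0)) (nhds 0) := by
      have := (Real.continuousAt_rpow_const 0 (p+1) (Or.inr (by linarith))).tendsto
      rw [Real.zero_rpow (by positivity : p + 1 ≠ 0)] at this
      exact this.mono_left nhdsWithin_le_nhds
    exact this
  · have hcomp := (aux_slope hp0).comp (aux_rpow_tendsto hp0)
    have := hcomp.div_const (p + 1)
    rw [div_div] at this
    refine this.congr (fun y => ?_)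
    simp only [Function.comp]
    rw [div_div, mul_comm (y ^ p) (p + 1)]

end aux

/-- For `p > 1`, `ln(y/arcsinₚ y)/y^p → −1/(p(p+1))` as `y → 0⁺`; equivalently
`ln(sinₚ x / x)/x^p → −1/(p(p+1))` as `x → 0⁺`. -/
theorem tendsto_log_div_arcsinp (p : ℝ) (hp : 1 < p) :
    Filter.Tendsto (fun y : ℝ => Real.log (y / arcsinp p y) / y ^ p)
      (nhdsWithin 0 (Set.Ioi 0)) (nhds (-1 / (p * (p + 1)))) := by
  have hp0 : 0 < p := lt_trans one_pos hp
  set v : ℝ → ℝ := fun y => (arcsinp p y - y) / y ^ (p + 1) with hv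
  set u : ℝ → ℝ := fun y => y ^ p * v y with hu
  have hvlim := aux_vlim hp
  have hL : 0 < 1 / (p * (p + 1)) := by positivity
  -- u tends to 0
  have hulim : Filter.Tendsto u (nhdsWithin 0 (Set.Ioi 0)) (nhds 0) := by
    have h1 : Filter.Tendsto (fun y : ℝ => y ^ p) (nhdsWithin (0:ℝ) (Set.Ioi 0)) (nhds 0) := by
      have := (Real.continuousAt_rpow_const 0 p (Or.inr hp0.le)).tendsto
      rw [Real.zero_rpow hp0.ne'] at this
      exact this.mono_left nhdsWithin_le_nhds
    simpa using h1.mul hvlim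
  -- eventually u y > 0
  have hupos : ∀ᶠ y in nhdsWithin (0:ℝ) (Set.Ioi 0), 0 < u y := by
    filter_upwards [self_mem_nhdsWithin,
      hvlim.eventually (eventually_gt_nhds hL)] with y hy hvy
    exact mul_pos (Real.rpow_pos_of_pos hy p) hvy
  -- log(1+u)/u → 1
  have hloglim : Filter.Tendsto (fun t : ℝ => Real.log (1 + t) / t)
      (nhdsWithin 0 {(0:ℝ)}ᶜ) (nhds 1) := by
    have hder : HasDerivAt (fun t : ℝ => Real.log (1 + t)) 1 0 := by
      have h1 : HasDerivAt (fun t : ℝ => 1 + t) 1 0 := by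
        simpa using (hasDerivAt_id' (0:ℝ)).const_add (1:ℝ)
      have := (Real.hasDerivAt_log (by norm_num : (1:ℝ) + 0 ≠ 0)).comp 0 h1
      simpa using h1.log (by norm_num)
    have := hasDerivAt_iff_tendsto_slope.mp hder
    refine this.congr' ?_
    filter_upwards [self_mem_nhdsWithin] with t ht
    simp [slope_def_field, sub_zero]
  have hucomp : Filter.Tendsto u (nhdsWithin 0 (Set.Ioi 0)) (nhdsWithin 0 {(0:ℝ)}ᶜ) := by
    rw [tendsto_nhdsWithin_iff]
    exact ⟨hulim, by filter_upwards [hupos] with y hy; exact hy.ne'⟩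
  have hmain : Filter.Tendsto (fun y => -(Real.log (1 + u y) / u y * v y))
      (nhdsWithin 0 (Set.Ioi 0)) (nhds (-(1 * (1 / (p * (p + 1)))))) :=
    ((hloglim.comp hucomp).mul hvlim).neg
  have heq : ∀ᶠ y in nhdsWithin (0:ℝ) (Set.Ioi 0),
      -(Real.log (1 + u y) / u y * v y) = Real.log (y / arcsinp p y) / y ^ p := by
    filter_upwards [self_mem_nhdsWithin, hupos] with y hy huy
    have hy0 : (0:ℝ) < y := hy
    have hyp : (0:ℝ) < y ^ p := Real.rpow_pos_of_pos hy0 p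
    have hyp1 : y ^ (p + 1) = y ^ p * y := by
      rw [Real.rpow_add hy0, Real.rpow_one]
    have huy' : u y = (arcsinp p y - y) / y := by
      rw [hu, hv]
      field_simp [hyp1]
      rw [hyp1]
      ring
    have hA : arcsinp p y = y * (1 + u y) := by
      rw [huy']; field_simp; ring
    have h1u : (0:ℝ) < 1 + u y := by linarith
    have hApos : 0 < arcsinp p y := by
      rw [hA]; exact mul_pos hy0 h1u
    have hlog : Real.log (y / arcsinp p y) = -Real.log (1 + u y) := by
      have hinv : y / arcsinp p y = (1 + u y)⁻¹ := by
        rw [hA]; field_simp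
      rw [hinv, Real.log_inv]
    rw [hlog]
    have huv : u y / y ^ p = v y := by
      rw [hu]; field_simp
    rw [← huv]
    field_simp
  have hfin : -(1 * (1 / (p * (p + 1)))) = -1 / (p * (p + 1)) := by ring
  rw [hfin] at hmain
  exact Filter.Tendsto.congr' heq hmain
end

section
/- Let p ≥ 2 be a real number. Then the function y ↦ ln(y/arcsinₚ(y))/arcsinₚ(y)^p is strictly decreasing on (0, 1). (Under the substitution y = sinₚ(x), this says that x ↦ ln(sinₚ(x)/x)/x^p is strictly decreasing on (0, πₚ/2).) -/
open Real

namespace SinpAux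

open Set

variable {p : ℝ}

lemma base_pos (hp : 2 ≤ p) {t : ℝ} (ht : t ∈ Ioo (-1:ℝ) 1) : 0 < 1 - t ^ p := by
  have h1 : |t| < 1 := abs_lt.2 ⟨ht.1, ht.2⟩
  have h2 : |t| ^ p < 1 := Real.rpow_lt_one (abs_nonneg t) h1 (by linarith)
  have h3 : t ^ p ≤ |t ^ p| := le_abs_self _
  have h4 : |t ^ p| ≤ |t| ^ p := Real.abs_rpow_le_abs_rpow t p
  linarith

lemma integrand_contOn (hp : 2 ≤ p) :
    ContinuousOn (fun t : ℝ => (1 - t ^ p) ^ (-1 / p)) (Ioo (-1:ℝ) 1) := by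
  intro t ht
  have hb : 0 < 1 - t ^ p := base_pos hp ht
  have h1 : ContinuousAt (fun t : ℝ => 1 - t ^ p) t :=
    continuousAt_const.sub (Real.continuousAt_rpow_const t p (Or.inr (by linarith)))
  exact (h1.rpow_const (Or.inl hb.ne')).continuousWithinAt

lemma hasDerivAt_arcsinp (hp : 2 ≤ p) {y : ℝ} (hy : y ∈ Ioo (-1:ℝ) 1) :
    HasDerivAt (arcsinp p) ((1 - y ^ p) ^ (-1 / p)) y := by
  have h0 : (0:ℝ) ∈ Ioo (-1:ℝ) 1 := by constructor <;> norm_num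
  have hsub : uIcc (0:ℝ) y ⊆ Ioo (-1:ℝ) 1 := Set.ordConnected_Ioo.uIcc_subset h0 hy
  have hint : IntervalIntegrable (fun t : ℝ => (1 - t ^ p) ^ (-1 / p)) MeasureTheory.volume 0 y :=
    ((integrand_contOn hp).mono hsub).intervalIntegrable
  have hmeas : StronglyMeasurableAtFilter (fun t : ℝ => (1 - t ^ p) ^ (-1 / p))
      (nhds y) MeasureTheory.volume :=
    (integrand_contOn hp).stronglyMeasurableAtFilter isOpen_Ioo y hy
  have hcont : ContinuousAt (fun t : ℝ => (1 - t ^ p) ^ (-1 / p)) y :=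
    (integrand_contOn hp).continuousAt (isOpen_Ioo.mem_nhds hy)
  exact intervalIntegral.integral_hasDerivAt_right hint hmeas hcont

lemma arcsinp_zero : arcsinp p 0 = 0 := intervalIntegral.integral_same

lemma arcsinp_contOn (hp : 2 ≤ p) : ContinuousOn (arcsinp p) (Ico (0:ℝ) 1) := by
  intro y hy
  have : y ∈ Ioo (-1:ℝ) 1 := ⟨by linarith [hy.1], hy.2⟩
  exact ((hasDerivAt_arcsinp hp this).continuousAt).continuousWithinAt


lemma neg_one_div_neg (hp0 : 0 < p) : -1 / p < 0 := div_neg_of_neg_of_pos (by norm_num) hp0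

lemma d_lt_d (hp : 2 ≤ p) {a b : ℝ} (ha : 0 ≤ a) (hab : a < b) (hb : b < 1) :
    (1 - a ^ p) ^ (-1 / p) < (1 - b ^ p) ^ (-1 / p) := by
  have hp0 : 0 < p := by linarith
  have h1 : a ^ p < b ^ p := Real.rpow_lt_rpow ha hab hp0
  have h2 : b ^ p < 1 := Real.rpow_lt_one (by linarith) hb hp0
  have h3 : 0 < 1 - b ^ p := by linarith
  exact Real.rpow_lt_rpow_of_neg h3 (by linarith) (neg_one_div_neg hp0)

lemma one_lt_d (hp : 2 ≤ p) {a : ℝ} (ha : 0 < a) (ha1 : a < 1) :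
    1 < (1 - a ^ p) ^ (-1 / p) := by
  have hp0 : 0 < p := by linarith
  have h1 : 0 < a ^ p := Real.rpow_pos_of_pos ha p
  have h2 : a ^ p < 1 := Real.rpow_lt_one ha.le ha1 hp0
  exact (Real.one_lt_rpow_iff_of_pos (by linarith)).2
    (Or.inr ⟨by linarith, neg_one_div_neg hp0⟩)

lemma d_pos (hp : 2 ≤ p) {a : ℝ} (ha : 0 ≤ a) (ha1 : a < 1) :
    0 < (1 - a ^ p) ^ (-1 / p) := by
  have hp0 : 0 < p := by linarith
  have h2 : a ^ p < 1 := Real.rpow_lt_one ha ha1 hp0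
  exact Real.rpow_pos_of_pos (by linarith) _

/-- key scalar inequality via AM-GM -/
lemma key_c (hp : 2 ≤ p) {c : ℝ} (hc0 : 0 < c) (hc1 : c ≤ 1) :
    (p - 1) * c ^ (p - 1) ≤ c + (p - 2) := by
  have hp1 : (1:ℝ) ≤ p - 1 := by linarith
  have hp1' : (0:ℝ) < p - 1 := by linarith
  have h1 : c ^ (p - 1) ≤ c ^ (1 / (p - 1)) :=
    Real.rpow_le_rpow_of_exponent_ge hc0 hc1
      (by rw [div_le_iff₀ hp1']; nlinarith)
  have h2 : c ^ (1 / (p - 1)) * (1:ℝ) ^ ((p - 2) / (p - 1)) ≤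
      (1 / (p - 1)) * c + ((p - 2) / (p - 1)) * 1 :=
    Real.geom_mean_le_arith_mean2_weighted (by positivity)
      (div_nonneg (by linarith) (by linarith)) hc0.le (by norm_num) (by field_simp; ring)
  rw [Real.one_rpow, mul_one] at h2
  have := mul_le_mul_of_nonneg_left (h1.trans h2) hp1'.le
  calc (p - 1) * c ^ (p - 1) ≤ (p-1) * ((1 / (p - 1)) * c + ((p - 2) / (p - 1)) * 1) := by
        exact mul_le_mul_of_nonneg_left (h1.trans h2) hp1'.le
    _ = c + (p - 2) := by field_simp

lemma key_ineq (hp : 2 ≤ p) {c u : ℝ} (hc0 : 0 < c) (hc1 : c < 1) (hu : 1 < u) :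
    (2 - p) * u + (p - 1) * c ^ (p - 1) - c * (u * u) < 0 := by
  have h1 : (p - 1) * c ^ (p - 1) ≤ c + (p - 2) := key_c hp hc0 hc1.le
  have h2 : (2 - p) * u ≤ (2 - p) * 1 := by nlinarith
  have hu2 : 1 < u * u := by nlinarith
  have h3 : c * 1 < c * (u * u) := mul_lt_mul_of_pos_left hu2 hc0
  linarith


/-- Strict monotone l'Hôpital rule on `(0,1)` anchored at `0`. -/
lemma lhopital_strictMonoOn (f g f' g' : ℝ → ℝ)
    (hf : ∀ y ∈ Ioo (0:ℝ) 1, HasDerivAt f (f' y) y)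
    (hg : ∀ y ∈ Ioo (0:ℝ) 1, HasDerivAt g (g' y) y)
    (hfc : ContinuousOn f (Ico 0 1)) (hgc : ContinuousOn g (Ico 0 1))
    (hf0 : f 0 = 0) (hg0 : g 0 = 0)
    (hg'pos : ∀ y ∈ Ioo (0:ℝ) 1, 0 < g' y)
    (hr : StrictMonoOn (fun y => f' y / g' y) (Ioo 0 1)) :
    StrictMonoOn (fun y => f y / g y) (Ioo 0 1) := by
  have hIccsub : ∀ {y : ℝ}, y ∈ Ioo (0:ℝ) 1 → Icc (0:ℝ) y ⊆ Ico (0:ℝ) 1 := by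
    intro y hy z hz; exact ⟨hz.1, lt_of_le_of_lt hz.2 hy.2⟩
  have hIoosub : ∀ {y : ℝ}, y ∈ Ioo (0:ℝ) 1 → Ioo (0:ℝ) y ⊆ Ioo (0:ℝ) 1 := by
    intro y hy z hz; exact ⟨hz.1, lt_trans hz.2 hy.2⟩
  -- g is positive on Ioo 0 1
  have hgpos : ∀ y ∈ Ioo (0:ℝ) 1, 0 < g y := by
    intro y hy
    obtain ⟨c, hc, hcslope⟩ := exists_hasDerivAt_eq_slope g g' hy.1
      (hgc.mono (hIccsub hy)) (fun z hz => hg z (hIoosub hy hz))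
    rw [hg0, sub_zero, sub_zero] at hcslope
    have := hg'pos c (hIoosub hy hc)
    rw [hcslope] at this
    exact (div_pos_iff.1 this).resolve_right (fun h => absurd hy.1 (not_lt.2 h.2.le)) |>.1
  -- key step: f y / g y < f' y / g' y
  have key : ∀ y ∈ Ioo (0:ℝ) 1, f y / g y < f' y / g' y := by
    intro y hy
    obtain ⟨c, hc, hceq⟩ := exists_ratio_hasDerivAt_eq_ratio_slope f f' hy.1
      (hfc.mono (hIccsub hy)) (fun z hz => hf z (hIoosub hy hz)) g g'
      (hgc.mono (hIccsub hy)) (fun z hz => hg z (hIoosub hy hz))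
    rw [hf0, hg0, sub_zero, sub_zero] at hceq
    have hc' : c ∈ Ioo (0:ℝ) 1 := hIoosub hy hc
    have h1 : f y / g y = f' c / g' c := by
      rw [div_eq_div_iff (hgpos y hy).ne' (hg'pos c hc').ne']
      linarith [hceq]
    rw [h1]
    exact hr hc' hy hc.2
  intro x hx y hy hxy
  obtain ⟨c, hc, hceq⟩ := exists_ratio_hasDerivAt_eq_ratio_slope f f' hxy
    (hfc.mono (fun z hz => ⟨le_trans hx.1.le hz.1, lt_of_le_of_lt hz.2 hy.2⟩))
    (fun z hz => hf z ⟨lt_trans hx.1 hz.1, lt_trans hz.2 hy.2⟩) g g'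
    (hgc.mono (fun z hz => ⟨le_trans hx.1.le hz.1, lt_of_le_of_lt hz.2 hy.2⟩))
    (fun z hz => hg z ⟨lt_trans hx.1 hz.1, lt_trans hz.2 hy.2⟩)
  have hc' : c ∈ Ioo (0:ℝ) 1 := ⟨lt_trans hx.1 hc.1, lt_trans hc.2 hy.2⟩
  -- g y - g x > 0
  have hgd : 0 < g y - g x := by
    obtain ⟨e, he, heq⟩ := exists_hasDerivAt_eq_slope g g' hxy
      (hgc.mono (fun z hz => ⟨le_trans hx.1.le hz.1, lt_of_le_of_lt hz.2 hy.2⟩))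
      (fun z hz => hg z ⟨lt_trans hx.1 hz.1, lt_trans hz.2 hy.2⟩)
    have he' : e ∈ Ioo (0:ℝ) 1 := ⟨lt_trans hx.1 he.1, lt_trans he.2 hy.2⟩
    have h2 := hg'pos e he'
    rw [heq] at h2
    have := (div_pos_iff.1 h2).resolve_right (fun h => absurd hxy (not_lt.2 (by linarith [h.2])))
    linarith [this.1]
  -- ratio of increments equals f' c / g' c
  have h3 : (f y - f x) / (g y - g x) = f' c / g' c := by
    rw [div_eq_div_iff hgd.ne' (hg'pos c hc').ne']
    linarith [hceq]
  have h4 : f x / g x < (f y - f x) / (g y - g x) := by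
    rw [h3]
    exact lt_trans (key x hx) (hr hx hc' hc.1)
  have hgx := hgpos x hx
  have hgy := hgpos y hy
  rw [div_lt_div_iff₀ hgx hgd] at h4
  rw [div_lt_div_iff₀ hgx hgy]
  nlinarith


lemma mem_Ioo' {y : ℝ} (hy : y ∈ Ioo (0:ℝ) 1) : y ∈ Ioo (-1:ℝ) 1 :=
  ⟨by linarith [hy.1], hy.2⟩

lemma arcsinp_bounds (hp : 2 ≤ p) {y : ℝ} (hy : y ∈ Ioo (0:ℝ) 1) :
    y < arcsinp p y ∧ arcsinp p y < y * (1 - y ^ p) ^ (-1 / p) := by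
  have hy0' : (0:ℝ) < y := hy.1
  obtain ⟨c, hc, hceq⟩ := exists_hasDerivAt_eq_slope (arcsinp p)
    (fun z => (1 - z ^ p) ^ (-1 / p)) hy.1
    ((arcsinp_contOn hp).mono (fun z hz => ⟨hz.1, lt_of_le_of_lt hz.2 hy.2⟩))
    (fun z hz => hasDerivAt_arcsinp hp (mem_Ioo' ⟨hz.1, lt_trans hz.2 hy.2⟩))
  rw [arcsinp_zero, sub_zero, sub_zero] at hceq
  have h1 : 1 < (1 - c ^ p) ^ (-1 / p) := one_lt_d hp hc.1 (lt_trans hc.2 hy.2)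
  have h2 : (1 - c ^ p) ^ (-1 / p) < (1 - y ^ p) ^ (-1 / p) :=
    d_lt_d hp hc.1.le hc.2 hy.2
  rw [hceq] at h1 h2
  constructor
  · calc y = 1 * y := (one_mul y).symm
      _ < (arcsinp p y / y) * y := by
          exact mul_lt_mul_of_pos_right h1 hy0'
      _ = arcsinp p y := div_mul_cancel₀ _ hy0'.ne'
  · calc arcsinp p y = (arcsinp p y / y) * y := (div_mul_cancel₀ _ hy0'.ne').symm
      _ < (1 - y ^ p) ^ (-1 / p) * y := mul_lt_mul_of_pos_right h2 hy.1
      _ = y * (1 - y ^ p) ^ (-1 / p) := mul_comm _ _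

noncomputable def Phi (p y : ℝ) : ℝ :=
  (arcsinp p y / y) ^ p + p * ((arcsinp p y / y) ^ (p - 1) * (1 - y ^ p) ^ ((p - 1) / p))

lemma deriv_Phi_neg (hp : 2 ≤ p) {y : ℝ} (hy : y ∈ Ioo (0:ℝ) 1) :
    ∃ E : ℝ, HasDerivAt (Phi p) E y ∧ E < 0 := by
  have hp0 : (0:ℝ) < p := by linarith
  have hy0 : (0:ℝ) < y := hy.1
  have hS : 0 < 1 - y ^ p := base_pos hp (mem_Ioo' hy)
  have hF := hasDerivAt_arcsinp hp (mem_Ioo' hy)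
  obtain ⟨hb1, hb2⟩ := arcsinp_bounds hp hy
  have hF0 : 0 < arcsinp p y := lt_trans hy0 hb1
  set c : ℝ := (1 - y ^ p) ^ (1 / p) with hcdef
  have hc0 : 0 < c := Real.rpow_pos_of_pos hS _
  have hc1 : c < 1 := by
    have : y ^ p > 0 := Real.rpow_pos_of_pos hy0 p
    exact Real.rpow_lt_one hS.le (by linarith) (by positivity)
  have hdc : (1 - y ^ p) ^ (-1 / p) = c⁻¹ := by
    rw [neg_div, Real.rpow_neg hS.le]
  have hccK : (1 - y ^ p) ^ ((p - 1) / p) = c ^ (p - 1) := by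
    rw [show (p - 1) / p = 1 / p * (p - 1) by ring, Real.rpow_mul hS.le]
  have hccm : (1 - y ^ p) ^ ((p - 1) / p - 1) = c⁻¹ := by
    rw [show (p - 1) / p - 1 = -1 / p by field_simp; ring, hdc]
  have hcp : c ^ (p - 1) * c = 1 - y ^ p := by
    rw [← Real.rpow_add_one hc0.ne' (p - 1), show p - 1 + 1 = p by ring, hcdef,
      ← Real.rpow_mul hS.le]
    rw [show 1 / p * p = 1 by field_simp, Real.rpow_one]
  -- u and its bounds
  set u : ℝ := arcsinp p y / y with hudef
  have hu1 : 1 < u := (one_lt_div hy0).2 hb1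
  have hu0 : 0 < u := by linarith
  have huc : u * c < 1 := by
    have h2 : u < c⁻¹ := by
      rw [hudef, div_lt_iff₀ hy0]
      calc arcsinp p y < y * (1 - y ^ p) ^ (-1 / p) := hb2
        _ = c⁻¹ * y := by rw [hdc]; ring
    calc u * c < c⁻¹ * c := mul_lt_mul_of_pos_right h2 hc0
      _ = 1 := inv_mul_cancel₀ hc0.ne'
  have hA : arcsinp p y = u * y := by rw [hudef]; field_simp
  have hyrel : y ^ (p - 1) = (1 - c ^ (p - 1) * c) / y := by
    rw [hcp, Real.rpow_sub hy0, Real.rpow_one]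
    norm_num
  have hupow : u ^ (p - 1) = u ^ (p - 2) * u := by
    rw [show p - 1 = p - 2 + 1 by ring, Real.rpow_add_one hu0.ne']
  have hupow2 : u ^ (p - 1 - 1) = u ^ (p - 2) := by
    rw [show p - 1 - 1 = p - 2 by ring]
  -- derivative builders
  have hinner : HasDerivAt (fun z : ℝ => 1 - z ^ p) (-(p * y ^ (p - 1))) y :=
    (Real.hasDerivAt_rpow_const (Or.inl hy0.ne')).const_sub 1
  have hu' : HasDerivAt (fun z => arcsinp p z / z)
      (((1 - y ^ p) ^ (-1 / p) * y - arcsinp p y * 1) / y ^ 2) y :=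
    hF.div (hasDerivAt_id y) hy0.ne'
  have h1 : HasDerivAt (fun z => (arcsinp p z / z) ^ p)
      ((((1 - y ^ p) ^ (-1 / p) * y - arcsinp p y * 1) / y ^ 2) * p * u ^ (p - 1)) y :=
    hu'.rpow_const (Or.inl hu0.ne')
  have h2 : HasDerivAt (fun z => (arcsinp p z / z) ^ (p - 1))
      ((((1 - y ^ p) ^ (-1 / p) * y - arcsinp p y * 1) / y ^ 2) * (p - 1) * u ^ (p - 1 - 1)) y :=
    hu'.rpow_const (Or.inl hu0.ne')
  have h4 : HasDerivAt (fun z : ℝ => (1 - z ^ p) ^ ((p - 1) / p))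
      (-(p * y ^ (p - 1)) * ((p - 1) / p) * (1 - y ^ p) ^ ((p - 1) / p - 1)) y :=
    hinner.rpow_const (Or.inl hS.ne')
  have hsum := h1.add ((h2.mul h4).const_mul p)
  refine ⟨_, hsum, ?_⟩
  have hEeq : (((1 - y ^ p) ^ (-1 / p) * y - arcsinp p y * 1) / y ^ 2) * p * u ^ (p - 1) +
      p * (((((1 - y ^ p) ^ (-1 / p) * y - arcsinp p y * 1) / y ^ 2) * (p - 1) * u ^ (p - 1 - 1)) *
          (1 - y ^ p) ^ ((p - 1) / p) +
        (arcsinp p y / y) ^ (p - 1) *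
          (-(p * y ^ (p - 1)) * ((p - 1) / p) * (1 - y ^ p) ^ ((p - 1) / p - 1))) =
      (p * u ^ (p - 2) / (y * c)) *
        ((2 - p) * u + (p - 1) * c ^ (p - 1) - c * (u * u)) := by
    rw [hdc, hccK, hccm, hupow2, ← hudef, hupow, hyrel, hA]
    field_simp
    ring
  rw [hEeq]
  have hψ : (2 - p) * u + (p - 1) * c ^ (p - 1) - c * (u * u) < 0 := key_ineq hp hc0 hc1 hu1
  have hfac : 0 < p * u ^ (p - 2) / (y * c) := by positivity
  exact mul_neg_of_pos_of_neg hfac hψ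


-- now new stuff
noncomputable def AA (p y : ℝ) : ℝ := y * (1 - y ^ p) ^ (-1 / p) - arcsinp p y
noncomputable def BB (p y : ℝ) : ℝ := p * (y * (arcsinp p y ^ p * (1 - y ^ p) ^ (-1 / p)))
noncomputable def AA' (p y : ℝ) : ℝ := y * (y ^ (p - 1) * (1 - y ^ p) ^ (-1 / p - 1))
noncomputable def BB' (p y : ℝ) : ℝ :=
  p * (arcsinp p y ^ p * (1 - y ^ p) ^ (-1 / p)
    + p * y * arcsinp p y ^ (p - 1) * ((1 - y ^ p) ^ (-1 / p) * (1 - y ^ p) ^ (-1 / p))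
    + y * arcsinp p y ^ p * (y ^ (p - 1) * (1 - y ^ p) ^ (-1 / p - 1)))

lemma strictAntiOn_Phi (hp : 2 ≤ p) : StrictAntiOn (Phi p) (Ioo (0:ℝ) 1) := by
  apply strictAntiOn_of_deriv_neg (convex_Ioo (0:ℝ) 1)
  · intro y hy
    obtain ⟨E, hE, _⟩ := deriv_Phi_neg hp hy
    exact hE.continuousAt.continuousWithinAt
  · intro y hy
    rw [interior_Ioo] at hy
    obtain ⟨E, hE, hneg⟩ := deriv_Phi_neg hp hy
    rw [hE.deriv]
    exact hneg

lemma Phi_pos (hp : 2 ≤ p) {y : ℝ} (hy : y ∈ Ioo (0:ℝ) 1) : 0 < Phi p y := by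
  have hp0 : (0:ℝ) < p := by linarith
  have hu0 : 0 < arcsinp p y / y :=
    div_pos (lt_trans hy.1 (arcsinp_bounds hp hy).1) hy.1
  have hS : 0 < 1 - y ^ p := base_pos hp (mem_Ioo' hy)
  have h1 := Real.rpow_pos_of_pos hu0 p
  have h2 := Real.rpow_pos_of_pos hu0 (p - 1)
  have h3 := Real.rpow_pos_of_pos hS ((p - 1) / p)
  unfold Phi
  exact add_pos h1 (mul_pos hp0 (mul_pos h2 h3))

lemma ratio2_eq (hp : 2 ≤ p) {y : ℝ} (hy : y ∈ Ioo (0:ℝ) 1) :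
    AA' p y / BB' p y = 1 / (p * Phi p y) := by
  have hp0 : (0:ℝ) < p := by linarith
  have hy0 : (0:ℝ) < y := hy.1
  have hS : 0 < 1 - y ^ p := base_pos hp (mem_Ioo' hy)
  have hF0 : 0 < arcsinp p y := lt_trans hy0 (arcsinp_bounds hp hy).1
  have hdm : (1 - y ^ p) ^ (-1 / p) = (1 - y ^ p) ^ (-1 / p - 1) * (1 - y ^ p) := by
    rw [← Real.rpow_add_one hS.ne' (-1 / p - 1)]
    congr 1; ring
  have hcc2 : (1 - y ^ p) ^ ((p - 1) / p) =
      (1 - y ^ p) ^ (-1 / p - 1) * ((1 - y ^ p) * (1 - y ^ p)) := by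
    rw [show (p - 1) / p = (-1 / p - 1) + 2 by field_simp; ring,
      Real.rpow_add hS (-1 / p - 1) 2, show ((2:ℝ) : ℝ) = ((2:ℕ) : ℝ) by norm_num,
      Real.rpow_natCast, pow_two]
  have hFp : arcsinp p y ^ p = arcsinp p y ^ (p - 1) * arcsinp p y := by
    rw [← Real.rpow_add_one hF0.ne' (p - 1)]; congr 1; ring
  have hyeq : y ^ p = y ^ (p - 1) * y := by
    rw [← Real.rpow_add_one hy0.ne' (p - 1)]; congr 1; ring
  have hdiv1 : (arcsinp p y / y) ^ p = arcsinp p y ^ p / y ^ p :=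
    Real.div_rpow hF0.le hy0.le p
  have hdiv2 : (arcsinp p y / y) ^ (p - 1) = arcsinp p y ^ (p - 1) / y ^ (p - 1) :=
    Real.div_rpow hF0.le hy0.le (p - 1)
  rw [hyeq] at hS
  have hm0 : (0:ℝ) < (1 - y ^ (p - 1) * y) ^ (-1 / p - 1) := Real.rpow_pos_of_pos hS _
  have hYp : (0:ℝ) < y ^ (p - 1) := Real.rpow_pos_of_pos hy0 _
  have hFp1 : (0:ℝ) < arcsinp p y ^ (p - 1) := Real.rpow_pos_of_pos hF0 _
  unfold AA' BB' Phi
  rw [hdiv1, hdiv2, hdm, hcc2, hFp, hyeq]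
  have hPden : (0:ℝ) < 1 - y ^ (p - 1) * y := hS
  field_simp
  have hA : 0 < (1 - y * y ^ (p - 1)) ^ ((-1 - p) / p) :=
    Real.rpow_pos_of_pos (by rw [mul_comm]; exact hPden) _
  rw [div_mul_eq_div_div, div_self hA.ne']
  congr 1
  ring


-- new material
lemma dd_contOn (hp : 2 ≤ p) :
    ContinuousOn (fun y : ℝ => (1 - y ^ p) ^ (-1 / p)) (Ico 0 1) :=
  (integrand_contOn hp).mono (fun z hz => ⟨by linarith [hz.1], hz.2⟩)

lemma hasDerivAt_dd (hp : 2 ≤ p) {y : ℝ} (hy : y ∈ Ioo (0:ℝ) 1) :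
    HasDerivAt (fun z : ℝ => (1 - z ^ p) ^ (-1 / p))
      (y ^ (p - 1) * (1 - y ^ p) ^ (-1 / p - 1)) y := by
  have hp0 : (0:ℝ) < p := by linarith
  have hS : 0 < 1 - y ^ p := base_pos hp (mem_Ioo' hy)
  have hinner : HasDerivAt (fun z : ℝ => 1 - z ^ p) (-(p * y ^ (p - 1))) y :=
    (Real.hasDerivAt_rpow_const (Or.inl hy.1.ne')).const_sub 1
  have := hinner.rpow_const (p := -1 / p) (Or.inl hS.ne')
  convert this using 1
  field_simp

lemma hasDerivAt_AA (hp : 2 ≤ p) {y : ℝ} (hy : y ∈ Ioo (0:ℝ) 1) :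
    HasDerivAt (AA p) (AA' p y) y := by
  have h1 := ((hasDerivAt_id y).mul (hasDerivAt_dd hp hy)).sub
    (hasDerivAt_arcsinp hp (mem_Ioo' hy))
  refine h1.congr_deriv ?_
  unfold AA'
  simp only [id_eq]
  ring

lemma hasDerivAt_BB (hp : 2 ≤ p) {y : ℝ} (hy : y ∈ Ioo (0:ℝ) 1) :
    HasDerivAt (BB p) (BB' p y) y := by
  have hF0 : 0 < arcsinp p y := lt_trans hy.1 (arcsinp_bounds hp hy).1
  have hFp : HasDerivAt (fun z => arcsinp p z ^ p)
      ((1 - y ^ p) ^ (-1 / p) * p * arcsinp p y ^ (p - 1)) y :=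
    (hasDerivAt_arcsinp hp (mem_Ioo' hy)).rpow_const (Or.inl hF0.ne')
  have h1 := ((hasDerivAt_id y).mul (hFp.mul (hasDerivAt_dd hp hy))).const_mul p
  refine h1.congr_deriv ?_
  unfold BB'
  simp only [id_eq, Pi.mul_apply, Pi.div_apply]
  ring

lemma AA_zero : AA p 0 = 0 := by simp [AA, arcsinp_zero]

lemma BB_zero : BB p 0 = 0 := by simp [BB]

lemma AA_contOn (hp : 2 ≤ p) : ContinuousOn (AA p) (Ico 0 1) :=
  (continuousOn_id.mul (dd_contOn hp)).sub (arcsinp_contOn hp)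

lemma BB_contOn (hp : 2 ≤ p) : ContinuousOn (BB p) (Ico 0 1) := by
  have hp0 : (0:ℝ) < p := by linarith
  exact (continuousOn_const.mul (continuousOn_id.mul
    (((arcsinp_contOn hp).rpow_const (fun x hx => Or.inr hp0.le)).mul (dd_contOn hp))))

lemma BB'_pos (hp : 2 ≤ p) {y : ℝ} (hy : y ∈ Ioo (0:ℝ) 1) : 0 < BB' p y := by
  have hp0 : (0:ℝ) < p := by linarith
  have hy0 := hy.1
  have hS : 0 < 1 - y ^ p := base_pos hp (mem_Ioo' hy)
  have hF0 : 0 < arcsinp p y := lt_trans hy.1 (arcsinp_bounds hp hy).1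
  have h1 := Real.rpow_pos_of_pos hF0 p
  have h2 := Real.rpow_pos_of_pos hF0 (p - 1)
  have h3 := Real.rpow_pos_of_pos hS (-1 / p)
  have h4 := Real.rpow_pos_of_pos hS (-1 / p - 1)
  have h5 := Real.rpow_pos_of_pos hy0 (p - 1)
  unfold BB'
  positivity

lemma strictMonoOn_ratio2 (hp : 2 ≤ p) :
    StrictMonoOn (fun y => AA' p y / BB' p y) (Ioo (0:ℝ) 1) := by
  have hp0 : (0:ℝ) < p := by linarith
  intro x hx y hy hxy
  simp only
  rw [ratio2_eq hp hx, ratio2_eq hp hy]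
  have h1 : Phi p y < Phi p x := strictAntiOn_Phi hp hx hy hxy
  have h2 : 0 < Phi p y := Phi_pos hp hy
  apply one_div_lt_one_div_of_lt
  · positivity
  · exact mul_lt_mul_of_pos_left h1 hp0

lemma strictMonoOn_AB (hp : 2 ≤ p) :
    StrictMonoOn (fun y => AA p y / BB p y) (Ioo (0:ℝ) 1) :=
  lhopital_strictMonoOn (AA p) (BB p) (AA' p) (BB' p)
    (fun y hy => hasDerivAt_AA hp hy) (fun y hy => hasDerivAt_BB hp hy)
    (AA_contOn hp) (BB_contOn hp) AA_zero BB_zero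
    (fun y hy => BB'_pos hp hy) (strictMonoOn_ratio2 hp)


-- new material
noncomputable def NN (p y : ℝ) : ℝ := Real.log (arcsinp p y / y)
noncomputable def DD (p y : ℝ) : ℝ := arcsinp p y ^ p
noncomputable def NN' (p y : ℝ) : ℝ := AA p y / (y * arcsinp p y)
noncomputable def DD' (p y : ℝ) : ℝ := p * arcsinp p y ^ (p - 1) * (1 - y ^ p) ^ (-1 / p)

lemma hasDerivAt_NN (hp : 2 ≤ p) {y : ℝ} (hy : y ∈ Ioo (0:ℝ) 1) :
    HasDerivAt (NN p) (NN' p y) y := by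
  have hy0 : (0:ℝ) < y := hy.1
  have hF0 : 0 < arcsinp p y := lt_trans hy0 (arcsinp_bounds hp hy).1
  have hu0 : 0 < arcsinp p y / y := div_pos hF0 hy0
  have h1 := ((hasDerivAt_arcsinp hp (mem_Ioo' hy)).div (hasDerivAt_id y) hy0.ne').log hu0.ne'
  refine h1.congr_deriv ?_
  unfold NN' AA
  simp only [id_eq, Pi.mul_apply, Pi.div_apply]
  field_simp

lemma hasDerivAt_DD (hp : 2 ≤ p) {y : ℝ} (hy : y ∈ Ioo (0:ℝ) 1) :
    HasDerivAt (DD p) (DD' p y) y := by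
  have hF0 : 0 < arcsinp p y := lt_trans hy.1 (arcsinp_bounds hp hy).1
  have h1 := (hasDerivAt_arcsinp hp (mem_Ioo' hy)).rpow_const (p := p) (Or.inl hF0.ne')
  refine h1.congr_deriv ?_
  unfold DD'
  ring

lemma NN_zero : NN p 0 = 0 := by simp [NN, arcsinp_zero]

lemma DD_zero (hp : 2 ≤ p) : DD p 0 = 0 := by
  have hp0 : p ≠ 0 := by positivity
  simp [DD, arcsinp_zero, Real.zero_rpow hp0]

lemma dd_zero (hp : 2 ≤ p) : ((1:ℝ) - (0:ℝ) ^ p) ^ (-1 / p) = 1 := by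
  have hp0 : p ≠ 0 := by positivity
  rw [Real.zero_rpow hp0, sub_zero, Real.one_rpow]

lemma NN_contOn (hp : 2 ≤ p) : ContinuousOn (NN p) (Ico 0 1) := by
  intro y hy
  rcases eq_or_lt_of_le hy.1 with h0 | h0
  · -- y = 0 : squeeze
    subst h0
    have hmem : (0:ℝ) ∈ Ico (0:ℝ) 1 := ⟨le_refl 0, one_pos⟩
    have hup : ContinuousWithinAt (fun z : ℝ => Real.log ((1 - z ^ p) ^ (-1 / p)))
        (Ico 0 1) 0 := by
      apply ContinuousWithinAt.log (dd_contOn hp 0 hmem)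
      rw [dd_zero hp]; norm_num
    have hupt : Filter.Tendsto (fun z : ℝ => Real.log ((1 - z ^ p) ^ (-1 / p)))
        (nhdsWithin 0 (Ico 0 1)) (nhds 0) := by
      have := hup.tendsto
      rwa [dd_zero hp, Real.log_one] at this
    unfold ContinuousWithinAt
    rw [NN_zero]
    apply tendsto_of_tendsto_of_tendsto_of_le_of_le' tendsto_const_nhds hupt
    · filter_upwards [self_mem_nhdsWithin] with z hz
      rcases eq_or_lt_of_le hz.1 with h1 | h1
      · rw [← h1, NN_zero]
      · exact Real.log_nonneg ((one_le_div h1).2 (arcsinp_bounds hp ⟨h1, hz.2⟩).1.le)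
    · filter_upwards [self_mem_nhdsWithin] with z hz
      rcases eq_or_lt_of_le hz.1 with h1 | h1
      · rw [← h1, NN_zero, dd_zero hp, Real.log_one]
      · apply Real.log_le_log (div_pos (lt_trans h1 (arcsinp_bounds hp ⟨h1, hz.2⟩).1) h1)
        rw [div_le_iff₀ h1]
        have := (arcsinp_bounds hp ⟨h1, hz.2⟩).2
        linarith [this]
  · exact (hasDerivAt_NN hp ⟨h0, hy.2⟩).continuousAt.continuousWithinAt

lemma DD_contOn (hp : 2 ≤ p) : ContinuousOn (DD p) (Ico 0 1) := by
  have hp0 : (0:ℝ) < p := by linarith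
  exact (arcsinp_contOn hp).rpow_const (fun x hx => Or.inr hp0.le)

lemma DD'_pos (hp : 2 ≤ p) {y : ℝ} (hy : y ∈ Ioo (0:ℝ) 1) : 0 < DD' p y := by
  have hp0 : (0:ℝ) < p := by linarith
  have hS : 0 < 1 - y ^ p := base_pos hp (mem_Ioo' hy)
  have hF0 : 0 < arcsinp p y := lt_trans hy.1 (arcsinp_bounds hp hy).1
  have h2 := Real.rpow_pos_of_pos hF0 (p - 1)
  have h3 := Real.rpow_pos_of_pos hS (-1 / p)
  unfold DD'
  positivity

lemma ratio1_eq (hp : 2 ≤ p) {y : ℝ} (hy : y ∈ Ioo (0:ℝ) 1) :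
    NN' p y / DD' p y = AA p y / BB p y := by
  have hp0 : (0:ℝ) < p := by linarith
  have hy0 : (0:ℝ) < y := hy.1
  have hS : 0 < 1 - y ^ p := base_pos hp (mem_Ioo' hy)
  have hF0 : 0 < arcsinp p y := lt_trans hy0 (arcsinp_bounds hp hy).1
  have hFp : arcsinp p y ^ p = arcsinp p y ^ (p - 1) * arcsinp p y := by
    rw [← Real.rpow_add_one hF0.ne' (p - 1)]; congr 1; ring
  have h2 : (0:ℝ) < arcsinp p y ^ (p - 1) := Real.rpow_pos_of_pos hF0 _
  have h3 : (0:ℝ) < (1 - y ^ p) ^ (-1 / p) := Real.rpow_pos_of_pos hS _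
  unfold NN' DD' BB
  rw [hFp]
  rw [div_div]
  congr 1
  ring

lemma strictMonoOn_ND (hp : 2 ≤ p) :
    StrictMonoOn (fun y => NN p y / DD p y) (Ioo (0:ℝ) 1) := by
  apply lhopital_strictMonoOn (NN p) (DD p) (NN' p) (DD' p)
    (fun y hy => hasDerivAt_NN hp hy) (fun y hy => hasDerivAt_DD hp hy)
    (NN_contOn hp) (DD_contOn hp) NN_zero (DD_zero hp)
    (fun y hy => DD'_pos hp hy)
  intro x hx y hy hxy
  simp only
  rw [ratio1_eq hp hx, ratio1_eq hp hy]
  exact strictMonoOn_AB hp hx hy hxy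


end SinpAux

/-- For `p ≥ 2`, `y ↦ ln(y/arcsinₚ y)/arcsinₚ(y)^p` is strictly decreasing on `(0, 1)`;
i.e. `x ↦ ln(sinₚ x / x)/x^p` is strictly decreasing on `(0, πₚ/2)`. -/
theorem strictAntiOn_log_sinp_div (p : ℝ) (hp : 2 ≤ p) :
    StrictAntiOn (fun y : ℝ => Real.log (y / arcsinp p y) / arcsinp p y ^ p)
      (Set.Ioo 0 1) := by
  intro x hx y hy hxy
  have h := SinpAux.strictMonoOn_ND hp hx hy hxy
  simp only [SinpAux.NN, SinpAux.DD] at h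
  have key : ∀ z : ℝ, z ∈ Set.Ioo (0:ℝ) 1 →
      Real.log (z / arcsinp p z) / arcsinp p z ^ p
        = -(Real.log (arcsinp p z / z) / arcsinp p z ^ p) := by
    intro z hz
    rw [show z / arcsinp p z = (arcsinp p z / z)⁻¹ by rw [inv_div], Real.log_inv]
    ring
  simp only [key x hx, key y hy]
  linarith
end

section
/- Let p ≥ 2 be a real number. Then the function y ↦ ln(arcsinhₚ(y)/y)/arcsinhₚ(y)^p is strictly increasing on (0, ∞). (Under the substitution y = sinhₚ(x), this says that x ↦ ln(x/sinhₚ(x))/x^p is strictly increasing for x > 0.) -/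
open Real Set

/-- The generalized inverse hyperbolic sine: `arcsinhp p y = ∫₀^y (1 + t^p)^(-1/p) dt`. -/
noncomputable def arcsinhp (p y : ℝ) : ℝ := ∫ t in (0:ℝ)..y, (1 + t ^ p) ^ (-1 / p)

/-- base positivity -/
lemma base_pos {p : ℝ} (hp : 2 ≤ p) {t : ℝ} (ht : -1 < t) : 0 < 1 + t ^ p := by
  rcases le_or_gt 0 t with h | h
  · have := Real.rpow_nonneg h p
    linarith
  · have h1 : |t ^ p| ≤ |t| ^ p := Real.abs_rpow_le_abs_rpow t p
    have h2 : |t| ^ p < 1 := by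
      apply Real.rpow_lt_one (abs_nonneg t) _ (by linarith)
      rw [abs_lt]; constructor <;> linarith
    have := abs_lt.mp (lt_of_le_of_lt h1 h2)
    linarith

lemma contB {p : ℝ} (hp : 2 ≤ p) : ContinuousOn (fun t : ℝ => (1 + t ^ p) ^ (-1 / p)) (Ioi (-1)) := by
  intro t ht
  apply ContinuousAt.continuousWithinAt
  have h1 : ContinuousAt (fun t : ℝ => 1 + t ^ p) t := by
    exact (Real.continuousAt_rpow_const t p (Or.inr (by linarith))).const_add 1
  exact ContinuousAt.comp (x := t) (Real.continuousAt_rpow_const _ _ (Or.inl (base_pos hp ht).ne')) h1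

lemma intB {p : ℝ} (hp : 2 ≤ p) {b : ℝ} (hb : 0 ≤ b) :
    IntervalIntegrable (fun t : ℝ => (1 + t ^ p) ^ (-1 / p)) MeasureTheory.volume 0 b := by
  apply ContinuousOn.intervalIntegrable_of_Icc hb
  exact (contB hp).mono (fun t ht => lt_of_lt_of_le (by norm_num) ht.1)

lemma derivA {p : ℝ} (hp : 2 ≤ p) {y : ℝ} (hy : 0 ≤ y) :
    HasDerivAt (arcsinhp p) ((1 + y ^ p) ^ (-1 / p)) y := by
  apply intervalIntegral.integral_hasDerivAt_right (intB hp hy)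
  · exact (contB hp).stronglyMeasurableAtFilter isOpen_Ioi _ (by simpa using by linarith : y ∈ Ioi (-1:ℝ))
  · exact ((contB hp) y (by simpa using by linarith)).continuousAt (Ioi_mem_nhds (by linarith))

lemma A_le {p : ℝ} (hp : 2 ≤ p) {y : ℝ} (hy : 0 < y) : arcsinhp p y ≤ y := by
  have h := intervalIntegral.integral_mono_on (a := (0:ℝ)) (b := y) hy.le (intB hp hy.le)
    (intervalIntegrable_const (c := (1:ℝ)))
    (fun t ht => by
      apply Real.rpow_le_one_of_one_le_of_nonpos
      · have := Real.rpow_nonneg ht.1 p; linarith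
      · have : 0 < p := by linarith
        rw [neg_div, neg_nonpos]
        positivity)
  simpa [arcsinhp] using h

lemma A_ge {p : ℝ} (hp : 2 ≤ p) {y : ℝ} (hy : 0 < y) :
    y * (1 + y ^ p) ^ (-1 / p) ≤ arcsinhp p y := by
  have h := intervalIntegral.integral_mono_on (a := (0:ℝ)) (b := y) hy.le
    (intervalIntegrable_const (c := (1 + y ^ p) ^ (-1 / p))) (intB hp hy.le)
    (fun t ht => by
      apply Real.rpow_le_rpow_of_nonpos
      · have := Real.rpow_nonneg ht.1 p; linarith
      · have := Real.rpow_le_rpow ht.1 ht.2 (by linarith : (0:ℝ) ≤ p); linarith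
      · have : 0 < p := by linarith
        rw [neg_div, neg_nonpos]
        positivity)
  simpa [arcsinhp, mul_comm] using h

lemma B_pos {p : ℝ} (hp : 2 ≤ p) {y : ℝ} (hy : 0 ≤ y) : 0 < (1 + y ^ p) ^ (-1 / p) :=
  Real.rpow_pos_of_pos (base_pos hp (by linarith)) _

lemma A_pos {p : ℝ} (hp : 2 ≤ p) {y : ℝ} (hy : 0 < y) : 0 < arcsinhp p y :=
  lt_of_lt_of_le (mul_pos hy (B_pos hp hy.le)) (A_ge hp hy)
noncomputable def Sf (p y : ℝ) : ℝ := Real.sqrt ((p-1)^2 + 4*p*(1+y^p)⁻¹)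

noncomputable def Lf (p y : ℝ) : ℝ :=
  y * (1 + y ^ p) ^ (-1 / p) * (1 + y ^ p) * (Sf p y - (p-1)) / 2

lemma key_ineq (p S : ℝ) (hp : 2 ≤ p) (h1 : p - 1 < S) (h2 : S < p + 1) :
    ((S^2-(p-1)^2)/(4*p) + p*(1-(S^2-(p-1)^2)/(4*p)))*(S-(p-1))*S
      - 2*p^2*((S^2-(p-1)^2)/(4*p))*(1-(S^2-(p-1)^2)/(4*p)) < 2*S*((S^2-(p-1)^2)/(4*p)) := by
  have hp0 : 0 < p := by linarith
  have hS0 : 0 < S := by linarith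
  have hR : 0 < (p-1)*p*(p+1) - 2*S - (p-2)*S^2 := by
    have e : (p-1)*p*(p+1) - 2*S - (p-2)*S^2 = (p+1-S)*(2+(p-2)*(p+1+S)) := by ring
    rw [e]
    have h3 : 0 < 2+(p-2)*(p+1+S) := by nlinarith
    exact mul_pos (by linarith) h3
  have key : 0 < (S-(p-1)) * ((p+1-S) * ((p-1)*p*(p+1) - 2*S - (p-2)*S^2)) :=
    mul_pos (by linarith) (mul_pos (by linarith) hR)
  rw [← sub_pos]
  have e2 : 2*S*((S^2-(p-1)^2)/(4*p)) - (((S^2-(p-1)^2)/(4*p) + p*(1-(S^2-(p-1)^2)/(4*p)))*(S-(p-1))*S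
      - 2*p^2*((S^2-(p-1)^2)/(4*p))*(1-(S^2-(p-1)^2)/(4*p)))
      = (S-(p-1)) * ((p+1-S) * ((p-1)*p*(p+1) - 2*S - (p-2)*S^2))/(8*p) := by
    field_simp
    ring
  rw [e2]
  positivity
noncomputable def LD (p y : ℝ) : ℝ :=
  (1 + y ^ p) ^ (-1 / p) *
    ((1 + p * y ^ p) * (Sf p y - (p-1)) - 2*p^2*(1 - (1+y^p)⁻¹) / Sf p y) / 2

lemma Sf_pos {p : ℝ} (hp : 2 ≤ p) {y : ℝ} (hy : 0 ≤ y) : 0 < Sf p y := by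
  have hW : 0 < 1 + y ^ p := base_pos hp (by linarith)
  have : 0 < (p-1)^2 + 4*p*(1+y^p)⁻¹ := by
    have : 0 < (1+y^p)⁻¹ := inv_pos.mpr hW
    nlinarith
  exact Real.sqrt_pos.mpr this

lemma derivL {p : ℝ} (hp : 2 ≤ p) {y : ℝ} (hy : 0 < y) :
    HasDerivAt (Lf p) (LD p y) y := by
  have hp0 : 0 < p := by linarith
  have hW0 : 0 < 1 + y ^ p := base_pos hp (by linarith)
  have hS0 : 0 < Sf p y := Sf_pos hp hy.le
  have hE : HasDerivAt (fun y : ℝ => y ^ p) (p * y ^ (p-1)) y :=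
    Real.hasDerivAt_rpow_const (Or.inl hy.ne')
  have hW : HasDerivAt (fun y : ℝ => 1 + y ^ p) (p * y ^ (p-1)) y := hE.const_add 1
  have hB : HasDerivAt (fun y : ℝ => (1 + y ^ p) ^ (-1/p))
      ((p * y ^ (p-1)) * (-1/p) * (1 + y ^ p) ^ (-1/p - 1)) y :=
    hW.rpow_const (Or.inl hW0.ne')
  have hV : HasDerivAt (fun y : ℝ => (1 + y ^ p)⁻¹)
      (-(p * y ^ (p-1)) / (1 + y ^ p) ^ 2) y := hW.inv hW0.ne'
  have hSa : HasDerivAt (fun y : ℝ => (p-1)^2 + 4*p*(1+y^p)⁻¹)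
      (4*p * (-(p * y ^ (p-1)) / (1 + y ^ p) ^ 2)) y := (hV.const_mul (4*p)).const_add _
  have hS : HasDerivAt (Sf p)
      ((4*p * (-(p * y ^ (p-1)) / (1 + y ^ p) ^ 2)) / (2 * Sf p y)) y := by
    have harg : (p-1)^2 + 4*p*(1+y^p)⁻¹ ≠ 0 := by
      have := hS0; rw [Sf, Real.sqrt_pos] at this; exact this.ne'
    exact hSa.sqrt harg
  have h1 : HasDerivAt (fun y : ℝ => y * (1 + y ^ p) ^ (-1/p))
      (1 * (1 + y ^ p) ^ (-1/p) + y * ((p * y ^ (p-1)) * (-1/p) * (1 + y ^ p) ^ (-1/p - 1))) y :=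
    (hasDerivAt_id y).mul hB
  have h2 := (h1.mul hW).mul (hS.sub_const (p-1))
  have h3 := h2.div_const 2
  have e1 : (fun y : ℝ => y * (1 + y ^ p) ^ (-1/p) * (1 + y ^ p) * (Sf p y - (p-1)) / 2) = Lf p := by
    funext z; rw [Lf]
  change HasDerivAt (Lf p) _ y at h3
  simp only [Pi.mul_apply] at h3
  convert h3 using 1
  have hxp : (1 + y ^ p) ^ (-1/p - 1) = (1 + y ^ p) ^ (-1/p) * (1 + y ^ p)⁻¹ := by
    rw [show (-1/p - 1 : ℝ) = (-1/p) + (-1) by ring, Real.rpow_add hW0, Real.rpow_neg_one]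
  have hyp : y ^ (p-1) = y ^ p * y⁻¹ := by
    rw [show (p - 1 : ℝ) = p + (-1) by ring, Real.rpow_add hy, Real.rpow_neg_one]
  rw [LD, hxp, hyp]
  field_simp
  ring
lemma Sf_sq {p : ℝ} (hp : 2 ≤ p) {y : ℝ} (hy : 0 ≤ y) :
    Sf p y ^ 2 = (p-1)^2 + 4*p*(1+y^p)⁻¹ := by
  rw [Sf, Real.sq_sqrt]
  have hW : 0 < 1 + y ^ p := base_pos hp (by linarith)
  have : 0 < (1+y^p)⁻¹ := inv_pos.mpr hW
  nlinarith

lemma Sf_lb {p : ℝ} (hp : 2 ≤ p) {y : ℝ} (hy : 0 < y) : p - 1 < Sf p y := by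
  have hW : 0 < 1 + y ^ p := base_pos hp (by linarith)
  have hV : 0 < (1+y^p)⁻¹ := inv_pos.mpr hW
  have h2 := Sf_sq hp hy.le
  have hS0 := Sf_pos hp hy.le
  nlinarith

lemma Sf_ub {p : ℝ} (hp : 2 ≤ p) {y : ℝ} (hy : 0 < y) : Sf p y < p + 1 := by
  have hE : 0 < y ^ p := Real.rpow_pos_of_pos hy p
  have hW : (1:ℝ) < 1 + y ^ p := by linarith
  have hV : (1+y^p)⁻¹ < 1 := by
    rw [inv_lt_one_iff₀]; right; exact hW
  have hV0 : 0 < (1+y^p)⁻¹ := inv_pos.mpr (by linarith)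
  have h2 := Sf_sq hp hy.le
  have hS0 := Sf_pos hp hy.le
  nlinarith

lemma LD_lt {p : ℝ} (hp : 2 ≤ p) {y : ℝ} (hy : 0 < y) :
    LD p y < (1 + y ^ p) ^ (-1 / p) := by
  have hp0 : 0 < p := by linarith
  have hW0 : 0 < 1 + y ^ p := base_pos hp (by linarith)
  have hB0 : 0 < (1 + y ^ p) ^ (-1/p) := B_pos hp hy.le
  have hS0 := Sf_pos hp hy.le
  have hS1 := Sf_lb hp hy
  have hS2 := Sf_ub hp hy
  set S := Sf p y with hSdef
  set V := (1+y^p)⁻¹ with hVdef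
  have hVW : V * (1+y^p) = 1 := inv_mul_cancel₀ hW0.ne'
  have hV0 : 0 < V := inv_pos.mpr hW0
  have hsq : S^2 = (p-1)^2 + 4*p*V := Sf_sq hp hy.le
  have hVeq : V = (S^2-(p-1)^2)/(4*p) := by
    field_simp
    linarith [hsq]
  have hK := key_ineq p S hp hS1 hS2
  rw [← hVeq] at hK
  -- hK : (V + p*(1-V))*(S-(p-1))*S - 2*p^2*V*(1-V) < 2*S*V
  set E := y ^ p with hEdef
  have hE0 : 0 < E := Real.rpow_pos_of_pos hy p
  have hVE : V * E = 1 - V := by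
    have : V * (1 + E) = 1 := hVW
    linarith [this]
  have e1 : ((1+p*E)*(S-(p-1))*S - 2*p^2*(1-V)) * V
      = (V + p*(1-V))*(S-(p-1))*S - 2*p^2*V*(1-V) := by
    linear_combination (p*(S-(p-1))*S) * hVE
  have h3 : ((1+p*E)*(S-(p-1))*S - 2*p^2*(1-V)) * V < (2*S) * V := by
    rw [e1]; linarith [hK]
  have hX : (1+p*E)*(S-(p-1))*S - 2*p^2*(1-V) < 2*S := lt_of_mul_lt_mul_right h3 hV0.le
  have hX2 : (1+p*E)*(S-(p-1)) - 2*p^2*(1-V)/S < 2 := by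
    rw [show (1+p*E)*(S-(p-1)) - 2*p^2*(1-V)/S
        = ((1+p*E)*(S-(p-1))*S - 2*p^2*(1-V))/S by field_simp]
    rw [div_lt_iff₀ hS0]
    linarith [hX]
  rw [LD]
  rw [show (-1/p : ℝ) = -1/p from rfl]
  calc (1 + E) ^ (-1/p) * ((1 + p*E) * (S - (p-1)) - 2*p^2*(1 - V)/S) / 2
      < (1 + E) ^ (-1/p) * 2 / 2 := by
        have := mul_lt_mul_of_pos_left hX2 hB0
        linarith
    _ = (1 + E) ^ (-1/p) := by ring
lemma cont_rpow_base {p : ℝ} (hp : 2 ≤ p) : Continuous (fun y : ℝ => 1 + y ^ p) := by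
  have : Continuous (fun y : ℝ => y ^ p) := by
    rw [continuous_iff_continuousAt]
    intro x
    exact Real.continuousAt_rpow_const x p (Or.inr (by linarith))
  exact continuous_const.add this

lemma contL {p : ℝ} (hp : 2 ≤ p) : ContinuousOn (Lf p) (Ici 0) := by
  have hW := cont_rpow_base hp
  have hne : ∀ x ∈ Ici (0:ℝ), 1 + x ^ p ≠ 0 := fun x hx => (base_pos hp (by simp at hx; linarith)).ne'
  have hB : ContinuousOn (fun y : ℝ => (1 + y ^ p) ^ (-1/p)) (Ici 0) :=
    ContinuousOn.rpow_const hW.continuousOn (fun x hx => Or.inl (hne x hx))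
  have hS : ContinuousOn (Sf p) (Ici 0) := by
    apply ContinuousOn.sqrt
    exact continuousOn_const.add (continuousOn_const.mul (hW.continuousOn.inv₀ hne))
  unfold Lf
  apply ContinuousOn.div_const
  exact (((continuousOn_id.mul hB).mul hW.continuousOn).mul (hS.sub continuousOn_const))

lemma A_gt_L {p : ℝ} (hp : 2 ≤ p) {y : ℝ} (hy : 0 < y) : Lf p y < arcsinhp p y := by
  have hmono : StrictMonoOn (fun z => arcsinhp p z - Lf p z) (Ici 0) := by
    apply strictMonoOn_of_deriv_pos (convex_Ici 0)
    · intro z hz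
      exact ((derivA hp hz).continuousAt.continuousWithinAt).sub (contL hp z hz)
    · intro z hz
      rw [interior_Ici] at hz
      have h := (derivA hp (le_of_lt hz)).sub (derivL hp hz)
      rw [show (fun z => arcsinhp p z - Lf p z) = arcsinhp p - Lf p from rfl, h.deriv]
      have := LD_lt hp hz
      linarith
  have h := hmono self_mem_Ici (mem_Ici.mpr hy.le) hy
  have hA0 : arcsinhp p 0 = 0 := intervalIntegral.integral_same
  have hL0 : Lf p 0 = 0 := by simp [Lf]
  simp only [hA0, hL0] at h
  linarith
noncomputable def Gf (p y : ℝ) : ℝ :=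
  1 - arcsinhp p y / (y * (1 + y ^ p) ^ (-1 / p))
    + p * (Real.log y - Real.log (arcsinhp p y))

noncomputable def GD (p y : ℝ) : ℝ :=
  (p-1)/y + arcsinhp p y * (1+y^p)⁻¹ / (y^2 * (1 + y ^ p) ^ (-1 / p))
    - p * (1 + y ^ p) ^ (-1 / p) / arcsinhp p y

lemma derivG {p : ℝ} (hp : 2 ≤ p) {y : ℝ} (hy : 0 < y) :
    HasDerivAt (Gf p) (GD p y) y := by
  have hp0 : 0 < p := by linarith
  have hW0 : 0 < 1 + y ^ p := base_pos hp (by linarith)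
  have hB0 : 0 < (1 + y ^ p) ^ (-1/p) := B_pos hp hy.le
  have hA0 : 0 < arcsinhp p y := A_pos hp hy
  have hA' : HasDerivAt (arcsinhp p) ((1 + y ^ p) ^ (-1/p)) y := derivA hp hy.le
  have hE : HasDerivAt (fun y : ℝ => y ^ p) (p * y ^ (p-1)) y :=
    Real.hasDerivAt_rpow_const (Or.inl hy.ne')
  have hW : HasDerivAt (fun y : ℝ => 1 + y ^ p) (p * y ^ (p-1)) y := hE.const_add 1
  have hB : HasDerivAt (fun y : ℝ => (1 + y ^ p) ^ (-1/p))
      ((p * y ^ (p-1)) * (-1/p) * (1 + y ^ p) ^ (-1/p - 1)) y :=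
    hW.rpow_const (Or.inl hW0.ne')
  have hyB : HasDerivAt (fun y : ℝ => y * (1 + y ^ p) ^ (-1/p))
      (1 * (1 + y ^ p) ^ (-1/p) + y * ((p * y ^ (p-1)) * (-1/p) * (1 + y ^ p) ^ (-1/p - 1))) y :=
    (hasDerivAt_id y).mul hB
  have hyB0 : y * (1 + y ^ p) ^ (-1/p) ≠ 0 := (mul_pos hy hB0).ne'
  have hq := hA'.div hyB hyB0
  have hlog := ((Real.hasDerivAt_log hy.ne').sub (hA'.log hA0.ne')).const_mul p
  have hG := (hq.const_sub 1).add hlog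
  have e0 : (fun y : ℝ => 1 - arcsinhp p y / (y * (1 + y ^ p) ^ (-1/p))
      + p * (Real.log y - Real.log (arcsinhp p y))) = Gf p := rfl
  change HasDerivAt (Gf p) _ y at hG
  convert hG using 1
  have hxp : (1 + y ^ p) ^ (-1/p - 1) = (1 + y ^ p) ^ (-1/p) * (1 + y ^ p)⁻¹ := by
    rw [show (-1/p - 1 : ℝ) = (-1/p) + (-1) by ring, Real.rpow_add hW0, Real.rpow_neg_one]
  have hyp : y ^ (p-1) = y ^ p * y⁻¹ := by
    rw [show (p - 1 : ℝ) = p + (-1) by ring, Real.rpow_add hy, Real.rpow_neg_one]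
  rw [GD, hxp, hyp]
  field_simp
  ring
lemma psi_identity (p y A B W S V : ℝ) (hV : V * W = 1) (hsq : S^2 = (p-1)^2+4*p*V) :
    V * (A - y*B*W*(S-(p-1))/2) * (A + y*B*W*(S+(p-1))/2)
      = (p-1)*y*A*B + A^2*V - p*B^2*y^2 := by
  linear_combination ((p-1)*y*A*B - p*B^2*y^2*(V*W+1))*hV - (V*y^2*B^2*W^2/4)*hsq

lemma gd_identity (p y A B V : ℝ) (hy : y ≠ 0) (hA : A ≠ 0) (hB : B ≠ 0) :
    (p-1)/y + A * V / (y^2 * B) - p * B / A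
      = ((p-1)*y*A*B + A^2*V - p*B^2*y^2)/(y^2*A*B) := by
  field_simp

lemma GD_pos {p : ℝ} (hp : 2 ≤ p) {y : ℝ} (hy : 0 < y) : 0 < GD p y := by
  have hp0 : 0 < p := by linarith
  have hW0 : 0 < 1 + y ^ p := base_pos hp (by linarith)
  have hB0 : 0 < (1 + y ^ p) ^ (-1/p) := B_pos hp hy.le
  have hA0 : 0 < arcsinhp p y := A_pos hp hy
  have hV0 : 0 < (1+y^p)⁻¹ := inv_pos.mpr hW0
  have hS0 := Sf_pos hp hy.le
  have hS1 := Sf_lb hp hy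
  have hsq : Sf p y ^2 = (p-1)^2 + 4*p*(1+y^p)⁻¹ := Sf_sq hp hy.le
  have hAL : Lf p y < arcsinhp p y := A_gt_L hp hy
  have hVW : (1+y^p)⁻¹ * (1+y^p) = 1 := inv_mul_cancel₀ hW0.ne'
  rw [GD, gd_identity p y _ _ _ hy.ne' hA0.ne' hB0.ne']
  apply div_pos _ (by positivity)
  rw [← psi_identity p y (arcsinhp p y) ((1 + y ^ p) ^ (-1/p)) (1+y^p) (Sf p y) ((1+y^p)⁻¹)
      hVW hsq]
  have hL : Lf p y = y * (1 + y ^ p) ^ (-1/p) * (1+y^p) * (Sf p y - (p-1)) / 2 := rfl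
  apply mul_pos (mul_pos hV0 _) _
  · rw [← hL]; linarith
  · have : 0 < y * (1 + y ^ p) ^ (-1/p) * (1+y^p) * (Sf p y + (p-1)) / 2 := by
      apply div_pos _ two_pos
      apply mul_pos (by positivity)
      linarith
    linarith
lemma B_tendsto {p : ℝ} (hp : 2 ≤ p) :
    Filter.Tendsto (fun y : ℝ => (1 + y ^ p) ^ (-1 / p)) (nhdsWithin 0 (Ioi 0)) (nhds 1) := by
  have hc : ContinuousAt (fun y : ℝ => (1 + y ^ p) ^ (-1 / p)) 0 := by
    have h1 : ContinuousAt (fun y : ℝ => 1 + y ^ p) 0 :=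
      (Real.continuousAt_rpow_const 0 p (Or.inr (by linarith))).const_add 1
    have h2 : (1:ℝ) + (0:ℝ) ^ p = 1 := by
      rw [Real.zero_rpow (by linarith : p ≠ 0)]; ring
    have := ContinuousAt.comp (x := (0:ℝ))
      (Real.continuousAt_rpow_const _ (-1/p) (Or.inl (by rw [h2]; norm_num))) h1
    exact this
  have h0 : ((1:ℝ) + (0:ℝ) ^ p) ^ (-1 / p) = 1 := by
    rw [Real.zero_rpow (by linarith : p ≠ 0)]
    norm_num
  have h := hc.tendsto.mono_left (nhdsWithin_le_nhds (s := Ioi (0:ℝ)))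
  rw [h0] at h
  exact h

lemma Aq_tendsto {p : ℝ} (hp : 2 ≤ p) :
    Filter.Tendsto (fun y : ℝ => arcsinhp p y / y) (nhdsWithin 0 (Ioi 0)) (nhds 1) := by
  apply tendsto_of_tendsto_of_tendsto_of_le_of_le' (B_tendsto hp) tendsto_const_nhds
  · filter_upwards [self_mem_nhdsWithin] with y hy
    rw [mem_Ioi] at hy
    rw [le_div_iff₀ hy]
    have := A_ge hp hy
    linarith [this]
  · filter_upwards [self_mem_nhdsWithin] with y hy
    rw [mem_Ioi] at hy
    rw [div_le_one hy]
    exact A_le hp hy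

lemma G_tendsto {p : ℝ} (hp : 2 ≤ p) :
    Filter.Tendsto (Gf p) (nhdsWithin 0 (Ioi 0)) (nhds 0) := by
  have t2 : Filter.Tendsto (fun y : ℝ => arcsinhp p y / (y * (1 + y ^ p) ^ (-1 / p)))
      (nhdsWithin 0 (Ioi 0)) (nhds 1) := by
    have h := (Aq_tendsto hp).div (B_tendsto hp) one_ne_zero
    have h2 : Filter.Tendsto (fun y : ℝ => arcsinhp p y / y / (1 + y ^ p) ^ (-1 / p))
        (nhdsWithin 0 (Ioi 0)) (nhds (1/1)) := h
    simpa [div_div] using h2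
  have t3 : Filter.Tendsto (fun y : ℝ => p * (Real.log y - Real.log (arcsinhp p y)))
      (nhdsWithin 0 (Ioi 0)) (nhds 0) := by
    have tl : Filter.Tendsto (fun y : ℝ => Real.log (arcsinhp p y / y))
        (nhdsWithin 0 (Ioi 0)) (nhds 0) := by
      have := ((Real.continuousAt_log one_ne_zero).tendsto).comp (Aq_tendsto hp)
      rw [Real.log_one] at this
      exact this
    have e : (fun y : ℝ => p * -Real.log (arcsinhp p y / y))
        =ᶠ[nhdsWithin 0 (Ioi 0)] (fun y : ℝ => p * (Real.log y - Real.log (arcsinhp p y))) := by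
      filter_upwards [self_mem_nhdsWithin] with y hy
      rw [mem_Ioi] at hy
      rw [Real.log_div (A_pos hp hy).ne' hy.ne']
      ring
    have := (tl.neg.const_mul p).congr' e
    simpa using this
  have := (tendsto_const_nhds (x := (1:ℝ)) (f := nhdsWithin (0:ℝ) (Ioi 0))).sub t2 |>.add t3
  have e2 : (1:ℝ) - 1 + 0 = 0 := by norm_num
  rw [e2] at this
  exact this

lemma G_pos {p : ℝ} (hp : 2 ≤ p) {y : ℝ} (hy : 0 < y) : 0 < Gf p y := by
  have hmono : StrictMonoOn (Gf p) (Ioi 0) := by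
    apply strictMonoOn_of_deriv_pos (convex_Ioi 0)
    · intro z hz
      exact (derivG hp hz).continuousAt.continuousWithinAt
    · intro z hz
      rw [interior_Ioi] at hz
      rw [(derivG hp hz).deriv]
      exact GD_pos hp hz
  have h2 : 0 ≤ Gf p (y/2) := by
    apply le_of_tendsto (G_tendsto hp)
    filter_upwards [Ioo_mem_nhdsGT_of_mem (Set.left_mem_Ico.mpr (by linarith : (0:ℝ) < y/2))]
      with z hz
    exact (hmono (mem_Ioi.mpr hz.1) (mem_Ioi.mpr (by linarith)) hz.2).le
  have h1 : Gf p (y/2) < Gf p y :=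
    hmono (mem_Ioi.mpr (by linarith)) (mem_Ioi.mpr hy) (by linarith)
  linarith
lemma derivF {p : ℝ} (hp : 2 ≤ p) {y : ℝ} (hy : 0 < y) :
    HasDerivAt (fun y : ℝ => Real.log (arcsinhp p y / y) / arcsinhp p y ^ p)
      ((((1 + y ^ p) ^ (-1/p) / arcsinhp p y - y⁻¹) * arcsinhp p y ^ p -
        Real.log (arcsinhp p y / y) * ((1 + y ^ p) ^ (-1/p) * p * arcsinhp p y ^ (p-1)))
        / (arcsinhp p y ^ p) ^ 2) y := by
  have hA0 : 0 < arcsinhp p y := A_pos hp hy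
  have hA' : HasDerivAt (arcsinhp p) ((1 + y ^ p) ^ (-1/p)) y := derivA hp hy.le
  have hU : ∀ᶠ z in nhds y, 0 < z ∧ 0 < arcsinhp p z := by
    have h1 : ∀ᶠ z in nhds y, 0 < z := eventually_gt_nhds hy
    have h2 : ∀ᶠ z in nhds y, 0 < arcsinhp p z := by
      have := hA'.continuousAt.preimage_mem_nhds (Ioi_mem_nhds hA0)
      filter_upwards [this] with z hz
      exact hz
    exact h1.and h2
  have hn : HasDerivAt (fun z : ℝ => Real.log (arcsinhp p z / z))
      ((1 + y ^ p) ^ (-1/p) / arcsinhp p y - y⁻¹) y := by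
    have h := (hA'.log hA0.ne').sub (Real.hasDerivAt_log hy.ne')
    apply h.congr_of_eventuallyEq
    filter_upwards [hU] with z hz
    rw [Real.log_div hz.2.ne' hz.1.ne']
    rfl
  have hd : HasDerivAt (fun z : ℝ => arcsinhp p z ^ p)
      ((1 + y ^ p) ^ (-1/p) * p * arcsinhp p y ^ (p-1)) y :=
    hA'.rpow_const (Or.inl hA0.ne')
  exact hn.div hd (Real.rpow_pos_of_pos hA0 p).ne'

lemma FD_pos {p : ℝ} (hp : 2 ≤ p) {y : ℝ} (hy : 0 < y) :
    0 < (((1 + y ^ p) ^ (-1/p) / arcsinhp p y - y⁻¹) * arcsinhp p y ^ p -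
        Real.log (arcsinhp p y / y) * ((1 + y ^ p) ^ (-1/p) * p * arcsinhp p y ^ (p-1)))
        / (arcsinhp p y ^ p) ^ 2 := by
  have hA0 : 0 < arcsinhp p y := A_pos hp hy
  have hB0 : 0 < (1 + y ^ p) ^ (-1/p) := B_pos hp hy.le
  have hG := G_pos hp hy
  apply div_pos _ (by positivity)
  have hApow : arcsinhp p y ^ p = arcsinhp p y ^ (p-1) * arcsinhp p y := by
    have h := Real.rpow_add hA0 (p-1) 1
    rw [Real.rpow_one] at h
    rw [show (p-1)+1 = p by ring] at h
    exact h
  have eN : ((1 + y ^ p) ^ (-1/p) / arcsinhp p y - y⁻¹) * arcsinhp p y ^ p -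
        Real.log (arcsinhp p y / y) * ((1 + y ^ p) ^ (-1/p) * p * arcsinhp p y ^ (p-1))
      = arcsinhp p y ^ (p-1) * (1 + y ^ p) ^ (-1/p) * Gf p y := by
    rw [Real.log_div hA0.ne' hy.ne', Gf, hApow]
    field_simp
    ring
  rw [eN]
  have hApm : 0 < arcsinhp p y ^ (p-1) := Real.rpow_pos_of_pos hA0 _
  positivity

/-- For `p ≥ 2`, `y ↦ ln(arcsinhₚ(y)/y)/arcsinhₚ(y)^p` is strictly increasing on `(0, ∞)`;
i.e. `x ↦ ln(x/sinhₚ x)/x^p` is strictly increasing for `x > 0`. -/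
theorem strictMonoOn_log_div_sinhp (p : ℝ) (hp : 2 ≤ p) :
    StrictMonoOn (fun y : ℝ => Real.log (arcsinhp p y / y) / arcsinhp p y ^ p)
      (Set.Ioi 0) := by
  apply strictMonoOn_of_deriv_pos (convex_Ioi 0)
  · intro z hz
    exact (derivF hp hz).continuousAt.continuousWithinAt
  · intro z hz
    rw [interior_Ioi] at hz
    rw [(derivF hp hz).deriv]
    exact FD_pos hp hz
end
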